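/- arXiv:1612.06229 — 6 statements merged into one kernel-verified Lean document; each statement's English description precedes it below -/
import Mathlib

section
/- Let 𝒞 ⊆ ℝ^d be a closed, bounded, convex set and A > 0 with the closed ball B̄(0,A) ⊆ 𝒞. If v ∈ 𝒞, w ∈ ℝ^d with |w − v| ≤ A/2, 0 < η ≤ 1, and t > 0 with |1 − t| ≤ η/2, then (v − ηw)/t ∈ 𝒞. -/
/-!
Writing `t⁻¹ • (v - η • w) = ((1 - η) / t) • v + (η / t) • (v - w)`, the second summand has norm
at most `η A / (2 t) ≤ (1 - (1 - η) / t) A` because `1 - t ≤ η / 2`; so the point is a convex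
combination of `v ∈ C` and a point of the ball `closedBall 0 A ⊆ C`.
-/

open Metric Pointwise

theorem Convex.smul_add_mem_of_closedBall_subset {E : Type*} [NormedAddCommGroup E]
    [NormedSpace ℝ E] {C : Set E} (hC : Convex ℝ C) {r : ℝ} (hr : 0 ≤ r)
    (hball : closedBall (0 : E) r ⊆ C) {v u : E} (hv : v ∈ C) {a : ℝ} (ha₀ : 0 ≤ a)
    (ha₁ : a ≤ 1) (hu : ‖u‖ ≤ (1 - a) * r) : a • v + u ∈ C := by
  have hu' : u ∈ (1 - a) • closedBall (0 : E) r := by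
    rwa [smul_closedBall _ _ hr, smul_zero, mem_closedBall_zero_iff,
      Real.norm_of_nonneg (by linarith)]
  exact hC.set_combo_subset ha₀ (by linarith) (by ring)
    (Set.add_mem_add (Set.smul_mem_smul_set hv) (Set.smul_set_mono hball hu'))

theorem smul_sub_mem_of_convex_general {d : ℕ} (C : Set (EuclideanSpace ℝ (Fin d))) (A : ℝ)
    (hconv : Convex ℝ C) (hball : Metric.closedBall (0 : EuclideanSpace ℝ (Fin d)) A ⊆ C)
    (v w : EuclideanSpace ℝ (Fin d)) (hv : v ∈ C) (hw : ‖w - v‖ ≤ A / 2)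
    (η t : ℝ) (hη1 : η ≤ 1) (htη : |1 - t| ≤ η / 2) :
    t⁻¹ • (v - η • w) ∈ C := by
  obtain ⟨ht_lo, ht_hi⟩ := abs_le.mp htη
  have hη : 0 ≤ η := by linarith
  have ht : 0 < t := by linarith
  have hA : 0 ≤ A := by linarith [norm_nonneg (w - v)]
  have hsplit : t⁻¹ • (v - η • w) = ((1 - η) / t) • v + (η / t) • (v - w) := by module
  rw [hsplit]
  refine hconv.smul_add_mem_of_closedBall_subset hA hball hv (by positivity)
    ((div_le_one ht).2 (by linarith)) ?_
  calc ‖(η / t) • (v - w)‖ = η / t * ‖w - v‖ := by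
        rw [norm_smul, norm_sub_rev, Real.norm_of_nonneg (by positivity)]
    _ ≤ η / t * (A / 2) := by gcongr
    _ ≤ (1 - (1 - η) / t) * A := by
        rw [one_sub_div ht.ne', div_mul_eq_mul_div, div_mul_eq_mul_div]
        gcongr ?_ / t
        nlinarith

/-- Geometric lemma: if `C` is a closed, bounded, convex set containing the closed ball
of radius `A` around the origin, `v ∈ C`, `|w - v| ≤ A/2`, `0 < η ≤ 1`, `t > 0` and
`|1 - t| ≤ η/2`, then `(v - ηw)/t ∈ C`. -/
theorem smul_sub_mem_of_convex {d : ℕ} (C : Set (EuclideanSpace ℝ (Fin d))) (A : ℝ)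
    (hA : 0 < A) (hclosed : IsClosed C) (hbounded : Bornology.IsBounded C)
    (hconv : Convex ℝ C) (hball : Metric.closedBall (0 : EuclideanSpace ℝ (Fin d)) A ⊆ C)
    (v w : EuclideanSpace ℝ (Fin d)) (hv : v ∈ C) (hw : ‖w - v‖ ≤ A / 2)
    (η t : ℝ) (hη : 0 < η) (hη1 : η ≤ 1) (ht : 0 < t) (htη : |1 - t| ≤ η / 2) :
    t⁻¹ • (v - η • w) ∈ C :=
  smul_sub_mem_of_convex_general C A hconv hball v w hv hw η t hη1 htη
end

section
/- Let 𝒞 ⊆ ℝ^d be a closed, bounded, convex set containing the origin in its interior, and let h : ℝ^d → [0,+∞] be strictly convex and bounded on 𝒞, equal to +∞ outside 𝒞, with h(0) = 0. Let P ∈ 𝒞 and let 𝕊_P be the set of internal directions at P. Then either D_v h(P) ∈ ℝ for every v ∈ 𝕊_P, or D_v h(P) = −∞ for every v ∈ 𝕊_P. -/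
open MeasureTheory Set Filter Topology
open scoped ENNReal Pointwise

noncomputable section

/-- A relativistic cost structure: a closed, bounded, convex set `C` containing the
origin in its interior, together with a function `h` which is strictly convex and
bounded on `C`, vanishing at the origin, and identically `+∞` outside `C`. -/
structure RelCost (d : ℕ) where
  C : Set (EuclideanSpace ℝ (Fin d))
  h : EuclideanSpace ℝ (Fin d) → ℝ≥0∞
  isClosed : IsClosed C
  isBounded : Bornology.IsBounded C
  convex : Convex ℝ C
  zero_mem_interior : (0 : EuclideanSpace ℝ (Fin d)) ∈ interior C
  h_zero : h 0 = 0
  h_strictConvexOn : ∀ x ∈ C, ∀ y ∈ C, x ≠ y → ∀ a b : ℝ, 0 < a → 0 < b → a + b = 1 →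
    h (a • x + b • y) < ENNReal.ofReal a * h x + ENNReal.ofReal b * h y
  h_bddOn : ∃ M : ℝ≥0∞, M ≠ ⊤ ∧ ∀ z ∈ C, h z ≤ M
  h_top : ∀ z, z ∉ C → h z = ⊤

/-- The set of transport plans between `μ` and `ν`. -/
def Plans {d : ℕ} (μ ν : Measure (EuclideanSpace ℝ (Fin d))) :
    Set (Measure (EuclideanSpace ℝ (Fin d) × EuclideanSpace ℝ (Fin d))) :=
  {γ | IsProbabilityMeasure γ ∧ γ.map Prod.fst = μ ∧ γ.map Prod.snd = ν}

/-- The cost of a transport plan `γ` at time `t`, for the relativistic cost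
`c_t (x, y) = h ((y - x) / t)`. -/
def transportCost {d : ℕ} (R : RelCost d) (t : ℝ)
    (γ : Measure (EuclideanSpace ℝ (Fin d) × EuclideanSpace ℝ (Fin d))) : ℝ≥0∞ :=
  ∫⁻ p, R.h (t⁻¹ • (p.2 - p.1)) ∂γ

/-- The minimal transport cost `C(t)` between `μ` and `ν` at time `t`. -/
def minCost {d : ℕ} (R : RelCost d) (μ ν : Measure (EuclideanSpace ℝ (Fin d))) (t : ℝ) :
    ℝ≥0∞ :=
  ⨅ γ ∈ Plans μ ν, transportCost R t γ

/-- The critical time `T`. -/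
def criticalTime {d : ℕ} (R : RelCost d) (μ ν : Measure (EuclideanSpace ℝ (Fin d))) : ℝ :=
  sInf {t : ℝ | 0 < t ∧ minCost R μ ν t ≠ ⊤}


/-- `v` is an internal direction at `P`: a unit vector such that `P + εv` belongs to the
interior of `C` for every sufficiently small `ε > 0`. -/
def IsInternalDir {d : ℕ} (C : Set (EuclideanSpace ℝ (Fin d)))
    (P v : EuclideanSpace ℝ (Fin d)) : Prop :=
  ‖v‖ = 1 ∧ ∃ ε₀ > (0 : ℝ), ∀ ε : ℝ, 0 < ε → ε < ε₀ → P + ε • v ∈ interior C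

/-!
On `C` the function `h` is finite and convex, so along any direction `v` the difference quotient
`Δ_v(ε) = (h (P + ε v) - h P) / ε` is monotone in `ε` and, as `ε ↘ 0`, either converges or
tends to `-∞`. If it tends to `-∞` along one internal direction `v`, any other internal
direction `w` splits as `w = α v + u` with `α > 0` and `P + t u ∈ C` for small `t > 0`, because
`P + ε w` is an interior point. Convexity at the midpoint gives
`Δ_w(ε) ≤ α Δ_v(2αε) + Δ_u(2ε)`, and `Δ_u` is bounded above near `0`, so `Δ_w(ε) → -∞` too.
-/

theorem MonotoneOn.tendsto_nhdsGT_or_tendsto_atBot {α β : Type*} [LinearOrder α]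
    [TopologicalSpace α] [OrderTopology α] [DenselyOrdered α]
    [ConditionallyCompleteLinearOrder β] [TopologicalSpace β] [OrderTopology β]
    {f : α → β} {a b : α} (hab : a < b) (hf : MonotoneOn f (Ioo a b)) :
    (∃ L, Tendsto f (𝓝[>] a) (𝓝 L)) ∨ Tendsto f (𝓝[>] a) atBot := by
  by_cases hbdd : BddBelow (f '' Ioo a b)
  · exact Or.inl ⟨_, hf.tendsto_nhdsWithin_Ioo_right (nonempty_Ioo.2 hab) hbdd⟩
  refine Or.inr (tendsto_atBot.2 fun K => ?_)
  obtain ⟨_, ⟨x, hx, rfl⟩, hxK⟩ := not_bddBelow_iff.1 hbdd K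
  filter_upwards [Ioo_mem_nhdsGT hx.1] with y hy
  exact (hf ⟨hy.1, hy.2.trans hx.2⟩ hx hy.2.le).trans hxK.le

section DiffQuot

variable {E : Type*} [AddCommGroup E] [Module ℝ E] {s : Set E} {f : E → ℝ} {P v u : E}

def diffQuot (f : E → ℝ) (P v : E) (ε : ℝ) : ℝ := (f (P + ε • v) - f P) / ε

theorem Convex.eventually_add_smul_mem (hs : Convex ℝ s) (hP : P ∈ s) {ε₁ : ℝ} (hε₁ : 0 < ε₁)
    (hv : P + ε₁ • v ∈ s) : ∀ᶠ t : ℝ in 𝓝[>] 0, P + t • v ∈ s := by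
  filter_upwards [Ioo_mem_nhdsGT hε₁] with t ht
  have hmem := hs.add_smul_mem hP hv ⟨div_nonneg ht.1.le hε₁.le, (div_le_one hε₁).2 ht.2.le⟩
  rwa [smul_smul, div_mul_cancel₀ _ hε₁.ne'] at hmem

theorem ConvexOn.monotoneOn_diffQuot (hf : ConvexOn ℝ s f) (hP : P ∈ s) {T : ℝ}
    (hv : ∀ t ∈ Ioo 0 T, P + t • v ∈ s) : MonotoneOn (diffQuot f P v) (Ioo 0 T) := by
  have hline : ConvexOn ℝ _ (fun t : ℝ => f (P + t • v)) :=
    (hf.translate_right P).comp_linearMap (LinearMap.toSpanSingleton ℝ E v)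
  intro x hx y hy hxy
  simpa [diffQuot] using hline.secant_mono (a := 0) (by simpa using hP) (hv x hx) (hv y hy)
    hx.1.ne' hy.1.ne' hxy

theorem ConvexOn.tendsto_diffQuot_or_tendsto_atBot (hf : ConvexOn ℝ s f) (hP : P ∈ s)
    (hv : ∀ᶠ t : ℝ in 𝓝[>] 0, P + t • v ∈ s) :
    (∃ L, Tendsto (diffQuot f P v) (𝓝[>] 0) (𝓝 L)) ∨
      Tendsto (diffQuot f P v) (𝓝[>] 0) atBot := by
  obtain ⟨T, hT, hsub⟩ := mem_nhdsGT_iff_exists_Ioo_subset.1 hv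
  exact (hf.monotoneOn_diffQuot hP hsub).tendsto_nhdsGT_or_tendsto_atBot hT

theorem ConvexOn.isBoundedUnder_le_diffQuot (hf : ConvexOn ℝ s f) (hP : P ∈ s)
    (hv : ∀ᶠ t : ℝ in 𝓝[>] 0, P + t • v ∈ s) :
    IsBoundedUnder (· ≤ ·) (𝓝[>] 0) (diffQuot f P v) := by
  rcases hf.tendsto_diffQuot_or_tendsto_atBot hP hv with ⟨L, hL⟩ | hbot
  · exact hL.isBoundedUnder_le
  · exact hbot.isBoundedUnder_le_atBot

theorem ConvexOn.diffQuot_smul_add_le (hf : ConvexOn ℝ s f) {α ε : ℝ} (hα : 0 < α)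
    (hε : 0 < ε) (hv : P + (2 * α * ε) • v ∈ s) (hu : P + (2 * ε) • u ∈ s) :
    diffQuot f P (α • v + u) ε ≤ α * diffQuot f P v (2 * α * ε) + diffQuot f P u (2 * ε) := by
  have hmid : P + ε • (α • v + u) =
      (1 / 2 : ℝ) • (P + (2 * α * ε) • v) + (1 / 2 : ℝ) • (P + (2 * ε) • u) := by
    module
  have hconv := hf.2 hv hu (by norm_num : (0 : ℝ) ≤ 1 / 2) (by norm_num : (0 : ℝ) ≤ 1 / 2)
    (by norm_num)
  rw [← hmid, smul_eq_mul, smul_eq_mul] at hconv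
  have hrhs : α * diffQuot f P v (2 * α * ε) + diffQuot f P u (2 * ε) =
      ((f (P + (2 * α * ε) • v) + f (P + (2 * ε) • u)) / 2 - f P) / ε := by
    unfold diffQuot
    field_simp
    ring
  rw [hrhs, diffQuot]
  gcongr
  linarith

theorem ConvexOn.tendsto_diffQuot_smul_add_atBot (hf : ConvexOn ℝ s f) (hP : P ∈ s) {α : ℝ}
    (hα : 0 < α) (hv : ∀ᶠ t : ℝ in 𝓝[>] 0, P + t • v ∈ s) (hu : ∀ᶠ t : ℝ in 𝓝[>] 0, P + t • u ∈ s)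
    (hbot : Tendsto (diffQuot f P v) (𝓝[>] 0) atBot) :
    Tendsto (diffQuot f P (α • v + u)) (𝓝[>] 0) atBot := by
  obtain ⟨M, hM⟩ := hf.isBoundedUnder_le_diffQuot hP hu
  have h2α : (0 : ℝ) < 2 * α := by positivity
  have hscale : Tendsto (fun ε : ℝ => 2 * α * ε) (𝓝[>] 0) (𝓝[>] 0) :=
    tendsto_iff_comap.2 (comap_mulLeft_nhdsGT_zero h2α).ge
  have hbound : Tendsto (fun ε => α * diffQuot f P v (2 * α * ε) + diffQuot f P u (2 * ε))
      (𝓝[>] 0) atBot :=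
    tendsto_atBot_add_right_of_ge' _ M ((hbot.comp hscale).const_mul_atBot hα)
      (eventually_nhdsGT_zero_mul_left two_pos hM)
  refine tendsto_atBot_mono' _ ?_ hbound
  filter_upwards [self_mem_nhdsWithin, eventually_nhdsGT_zero_mul_left h2α hv,
    eventually_nhdsGT_zero_mul_left two_pos hu] with ε hε hvε huε
  exact hf.diffQuot_smul_add_le hα hε hvε huε

end DiffQuot

theorem Convex.exists_pos_eventually_add_smul_sub_smul_mem {E : Type*} [AddCommGroup E]
    [Module ℝ E] [TopologicalSpace E] [IsTopologicalAddGroup E] [ContinuousSMul ℝ E]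
    {s : Set E} (hs : Convex ℝ s) {P w : E} (hP : P ∈ s)
    (hw : ∀ᶠ t : ℝ in 𝓝[>] 0, P + t • w ∈ interior s) (v : E) :
    ∃ α : ℝ, 0 < α ∧ ∀ᶠ t : ℝ in 𝓝[>] 0, P + t • (w - α • v) ∈ s := by
  obtain ⟨ε₁, hε₁w, hε₁⟩ := (hw.and self_mem_nhdsWithin).exists
  have hnear : ∀ᶠ α : ℝ in 𝓝 0, P + ε₁ • (w - α • v) ∈ interior s := by
    refine ContinuousAt.eventually_mem (by fun_prop) (isOpen_interior.mem_nhds ?_)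
    simpa using hε₁w
  obtain ⟨α, hαw, hα⟩ := ((hnear.filter_mono nhdsWithin_le_nhds).and
    (self_mem_nhdsWithin : Ioi (0 : ℝ) ∈ 𝓝[>] 0)).exists
  exact ⟨α, hα, hs.eventually_add_smul_mem hP hε₁ (interior_subset hαw)⟩

theorem IsInternalDir.eventually_mem_interior {d : ℕ} {C : Set (EuclideanSpace ℝ (Fin d))}
    {P v : EuclideanSpace ℝ (Fin d)} (hv : IsInternalDir C P v) :
    ∀ᶠ t : ℝ in 𝓝[>] 0, P + t • v ∈ interior C := by
  obtain ⟨-, ε₀, hε₀, hmem⟩ := hv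
  filter_upwards [Ioo_mem_nhdsGT hε₀] with t ht using hmem t ht.1 ht.2

namespace RelCost

variable {d : ℕ} (R : RelCost d)

theorem h_ne_top {z : EuclideanSpace ℝ (Fin d)} (hz : z ∈ R.C) : R.h z ≠ ⊤ := by
  obtain ⟨M, hM, hle⟩ := R.h_bddOn
  exact ne_top_of_le_ne_top hM (hle z hz)

theorem strictConvexOn_toReal_h : StrictConvexOn ℝ R.C (fun z => (R.h z).toReal) := by
  refine ⟨R.convex, fun x hx y hy hxy a b ha hb hab => ?_⟩
  have hax : ENNReal.ofReal a * R.h x ≠ ⊤ :=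
    ENNReal.mul_ne_top ENNReal.ofReal_ne_top (R.h_ne_top hx)
  have hby : ENNReal.ofReal b * R.h y ≠ ⊤ :=
    ENNReal.mul_ne_top ENNReal.ofReal_ne_top (R.h_ne_top hy)
  have hlt := (ENNReal.toReal_lt_toReal (R.h_ne_top (R.convex hx hy ha.le hb.le hab))
    (ENNReal.add_ne_top.2 ⟨hax, hby⟩)).2 (R.h_strictConvexOn x hx y hy hxy a b ha hb hab)
  rwa [ENNReal.toReal_add hax hby, ENNReal.toReal_mul, ENNReal.toReal_mul,
    ENNReal.toReal_ofReal ha.le, ENNReal.toReal_ofReal hb.le] at hlt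

end RelCost

/-- Realness or constant infiniteness of the directional derivatives: for `P ∈ C`,
either for every internal direction `v` the directional derivative
`D_v h(P) = lim_{ε ↘ 0} (h(P + εv) - h(P))/ε` is a real number, or it is `-∞` for every
internal direction. -/
theorem dirDeriv_real_or_botInfinite {d : ℕ} (R : RelCost d)
    (P : EuclideanSpace ℝ (Fin d)) (hP : P ∈ R.C) :
    (∀ v, IsInternalDir R.C P v → ∃ L : ℝ,
      Tendsto (fun ε : ℝ => ((R.h (P + ε • v)).toReal - (R.h P).toReal) / ε)
        (𝓝[>] 0) (𝓝 L)) ∨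
    (∀ v, IsInternalDir R.C P v →
      Tendsto (fun ε : ℝ => ((R.h (P + ε • v)).toReal - (R.h P).toReal) / ε)
        (𝓝[>] 0) atBot) := by
  have hf := R.strictConvexOn_toReal_h.convexOn
  have hmem : ∀ v, IsInternalDir R.C P v → ∀ᶠ t : ℝ in 𝓝[>] 0, P + t • v ∈ R.C := fun v hv =>
    hv.eventually_mem_interior.mono fun _ ht => interior_subset ht
  by_cases hbot : ∃ v, IsInternalDir R.C P v ∧
      Tendsto (diffQuot (fun z => (R.h z).toReal) P v) (𝓝[>] 0) atBot
  · obtain ⟨v, hv, hv_bot⟩ := hbot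
    refine Or.inr fun w hw => ?_
    obtain ⟨α, hα, hu⟩ :=
      R.convex.exists_pos_eventually_add_smul_sub_smul_mem hP hw.eventually_mem_interior v
    have hw_bot := hf.tendsto_diffQuot_smul_add_atBot hP hα (hmem v hv) hu hv_bot
    rwa [add_sub_cancel] at hw_bot
  · simp only [not_exists, not_and] at hbot
    exact Or.inl fun v hv =>
      (hf.tendsto_diffQuot_or_tendsto_atBot hP (hmem v hv)).resolve_right (hbot v hv)
end
end

section
/- Let 𝒞 ⊆ ℝ^d be a closed, bounded, convex set containing the origin in its interior, and let h : ℝ^d → [0,+∞] be strictly convex and bounded on 𝒞, equal to +∞ outside 𝒞, with h(0) = 0. Let P ∈ 𝒞 and let 𝕊_P be the set of internal directions at P. Then the map v ↦ D_v h(P), defined on 𝕊_P with values in [−∞,+∞) (with the order topology on [−∞,+∞)), is continuous. -/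
open MeasureTheory Set Filter Topology
open scoped ENNReal Pointwise

noncomputable section

/-- The directional derivative `D_v h(P) := lim_{ε ↘ 0} (h(P + εv) - h(P)) / ε`,
with values in `[-∞, +∞)`; since along an internal direction the difference quotient
is monotone by convexity, the limit always exists and equals the `limsup`. -/
def dirDeriv {d : ℕ} (h : EuclideanSpace ℝ (Fin d) → ℝ≥0∞)
    (P v : EuclideanSpace ℝ (Fin d)) : EReal :=
  Filter.limsup
    (fun ε : ℝ => ((((h (P + ε • v)).toReal - (h P).toReal) / ε : ℝ) : EReal)) (𝓝[>] 0)

set_option maxHeartbeats 1600000 in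
/-- Continuity of the directional derivative: for `P ∈ C`, the map `v ↦ D_v h(P)`,
with values in the extended reals, is continuous on the set `𝕊_P` of internal
directions at `P`. -/
theorem dirDeriv_continuousOn {d : ℕ} (R : RelCost d)
    (P : EuclideanSpace ℝ (Fin d)) (hP : P ∈ R.C) :
    ContinuousOn (fun v => dirDeriv R.h P v) {v | IsInternalDir R.C P v} := by
  classical
  obtain ⟨M, hMtop, hMle⟩ := R.h_bddOn
  set g : EuclideanSpace ℝ (Fin d) → ℝ := fun x => (R.h x).toReal with hgdef
  have hfin : ∀ x ∈ R.C, R.h x ≠ ⊤ := fun x hx => ne_top_of_le_ne_top hMtop (hMle x hx)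
  -- convexity of `g` on `C`
  have hgconv : ConvexOn ℝ R.C g := by
    refine ⟨R.convex, fun x hx y hy a b ha hb hab => ?_⟩
    rcases ha.eq_or_lt with rfl | ha'
    · rw [zero_add] at hab; subst hab
      simp
    rcases hb.eq_or_lt with rfl | hb'
    · rw [add_zero] at hab; subst hab
      simp
    rcases eq_or_ne x y with rfl | hxy
    · have : a • x + b • x = x := by rw [← add_smul, hab, one_smul]
      rw [this]
      have h2 : a * g x + b * g x = g x := by rw [← add_mul, hab, one_mul]
      rw [smul_eq_mul, smul_eq_mul, h2]
    · have key := (R.h_strictConvexOn x hx y hy hxy a b ha' hb' hab).le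
      have hxt : R.h x ≠ ⊤ := hfin x hx
      have hyt : R.h y ≠ ⊤ := hfin y hy
      have hrt : ENNReal.ofReal a * R.h x + ENNReal.ofReal b * R.h y ≠ ⊤ := by
        apply ENNReal.add_ne_top.2
        exact ⟨ENNReal.mul_ne_top ENNReal.ofReal_ne_top hxt,
          ENNReal.mul_ne_top ENNReal.ofReal_ne_top hyt⟩
      have := ENNReal.toReal_mono hrt key
      rwa [ENNReal.toReal_add (ENNReal.mul_ne_top ENNReal.ofReal_ne_top hxt)
        (ENNReal.mul_ne_top ENNReal.ofReal_ne_top hyt), ENNReal.toReal_mul,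
        ENNReal.toReal_mul, ENNReal.toReal_ofReal ha, ENNReal.toReal_ofReal hb] at this
  -- the open convex cone of internal vectors
  set T : Set (EuclideanSpace ℝ (Fin d)) :=
    {w | ∃ ε₀ > (0:ℝ), ∀ ε : ℝ, 0 < ε → ε < ε₀ → P + ε • w ∈ interior R.C} with hTdef
  have hST : {v | IsInternalDir R.C P v} ⊆ T := fun v hv => hv.2
  have hTconv : Convex ℝ T := by
    intro x hx y hy a b ha hb hab
    obtain ⟨ex, hex, hx'⟩ := hx
    obtain ⟨ey, hey, hy'⟩ := hy
    refine ⟨min ex ey, lt_min hex hey, fun ε hε hε' => ?_⟩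
    have h1 : P + ε • (a • x + b • y) = a • (P + ε • x) + b • (P + ε • y) := by
      match_scalars <;> simp <;> linarith
    rw [h1]
    exact R.convex.interior (hx' ε hε (hε'.trans_le (min_le_left _ _)))
      (hy' ε hε (hε'.trans_le (min_le_right _ _))) ha hb hab
  have hTopen : IsOpen T := by
    rw [Metric.isOpen_iff]
    rintro w ⟨ε₀, hε₀, hw'⟩
    have hε₁ : (0:ℝ) < ε₀ / 2 := by linarith
    have h1 : P + (ε₀ / 2) • w ∈ interior R.C := hw' _ hε₁ (by linarith)
    obtain ⟨r, hr, hball⟩ := Metric.isOpen_iff.1 isOpen_interior _ h1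
    refine ⟨r / (ε₀ / 2), by positivity, fun u hu => ?_⟩
    have hu1 : P + (ε₀ / 2) • u ∈ interior R.C := by
      apply hball
      rw [Metric.mem_ball, dist_eq_norm]
      have : P + (ε₀ / 2) • u - (P + (ε₀ / 2) • w) = (ε₀ / 2) • (u - w) := by
        rw [smul_sub]; abel
      rw [this, norm_smul, Real.norm_eq_abs, abs_of_pos hε₁]
      rw [Metric.mem_ball, dist_eq_norm] at hu
      calc ε₀ / 2 * ‖u - w‖ < ε₀ / 2 * (r / (ε₀ / 2)) := by
            exact mul_lt_mul_of_pos_left hu hε₁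
        _ = r := by field_simp
    refine ⟨ε₀ / 2, hε₁, fun ε hε hε' => ?_⟩
    have hcomb : P + ε • u = (ε / (ε₀ / 2)) • (P + (ε₀ / 2) • u)
        + (1 - ε / (ε₀ / 2)) • P := by
      have h2 : (ε₀:ℝ) / 2 ≠ 0 := ne_of_gt hε₁
      match_scalars
      · field_simp
        ring
      · field_simp
    rw [hcomb]
    exact R.convex.combo_interior_closure_mem_interior hu1 (subset_closure hP)
      (by positivity) (by rw [sub_nonneg]; exact (div_le_one hε₁).2 hε'.le)
      (by ring)
  -- difference quotients
  set Q : EuclideanSpace ℝ (Fin d) → ℝ → ℝ :=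
    fun v ε => ((R.h (P + ε • v)).toReal - (R.h P).toReal) / ε with hQdef
  have hQg : ∀ v ε, Q v ε = (g (P + ε • v) - g P) / ε := fun _ _ => rfl
  have hdirQ : ∀ v, dirDeriv R.h P v
      = Filter.limsup (fun ε : ℝ => ((Q v ε : ℝ) : EReal)) (𝓝[>] 0) := fun _ => rfl
  -- key facts along each internal vector
  have key : ∀ v ∈ T, ∃ ε₀ > (0:ℝ),
      (∀ ε : ℝ, 0 < ε → ε < ε₀ → P + ε • v ∈ interior R.C) ∧
      (∀ ε ε' : ℝ, 0 < ε → ε ≤ ε' → ε' < ε₀ → Q v ε ≤ Q v ε') ∧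
      Tendsto (fun ε : ℝ => ((Q v ε : ℝ) : EReal)) (𝓝[>] 0) (𝓝 (dirDeriv R.h P v)) ∧
      (∀ ε : ℝ, 0 < ε → ε < ε₀ → dirDeriv R.h P v ≤ ((Q v ε : ℝ) : EReal)) := by
    rintro v ⟨ε₀, hε₀, hv⟩
    have hmem : ∀ ε : ℝ, 0 ≤ ε → ε < ε₀ → P + ε • v ∈ R.C := by
      intro ε hε hε'
      rcases hε.eq_or_lt with rfl | hε
      · simpa using hP
      · exact interior_subset (hv ε hε hε')
    -- convexity along the segment
    have hφ : ConvexOn ℝ (Ico (0:ℝ) ε₀) (fun ε : ℝ => g (P + ε • v)) := by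
      have := hgconv.comp_affineMap (AffineMap.lineMap P (P + v))
      have hsub : Ico (0:ℝ) ε₀ ⊆ (AffineMap.lineMap P (P + v)) ⁻¹' R.C := by
        intro ε hε
        simp only [mem_preimage, AffineMap.lineMap_apply, vsub_eq_sub,
          add_sub_cancel_left, vadd_eq_add]
        have := hmem ε hε.1 hε.2
        rwa [add_comm] at this
      have := this.subset hsub (convex_Ico _ _)
      refine this.congr (fun ε _ => ?_)
      simp [AffineMap.lineMap_apply, add_comm]
    have hmono : ∀ ε ε' : ℝ, 0 < ε → ε ≤ ε' → ε' < ε₀ → Q v ε ≤ Q v ε' := by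
      intro ε ε' hε hεε' hε'
      have h0 : (0:ℝ) ∈ Ico (0:ℝ) ε₀ := ⟨le_refl _, hε₀⟩
      have hε1 : ε ∈ Ico (0:ℝ) ε₀ := ⟨hε.le, lt_of_le_of_lt hεε' hε'⟩
      have hε2 : ε' ∈ Ico (0:ℝ) ε₀ := ⟨(hε.trans_le hεε').le, hε'⟩
      have := hφ.secant_mono h0 hε1 hε2 hε.ne' (hε.trans_le hεε').ne' hεε'
      simp only [sub_zero] at this
      have h0v : (fun ε : ℝ => g (P + ε • v)) 0 = g P := by simp
      rw [hQg, hQg]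
      simpa [h0v] using this
    have hmonoOn : MonotoneOn (fun ε : ℝ => ((Q v ε : ℝ) : EReal)) (Ioo (0:ℝ) ε₀) := by
      intro ε hε ε' hε' hεε'
      exact EReal.coe_le_coe_iff.2 (hmono ε ε' hε.1 hεε' hε'.2)
    have hne : (Ioo (0:ℝ) ε₀).Nonempty := nonempty_Ioo.2 hε₀
    have hbdd : BddBelow ((fun ε : ℝ => ((Q v ε : ℝ) : EReal)) '' Ioo (0:ℝ) ε₀) :=
      OrderBot.bddBelow _
    have htends := MonotoneOn.tendsto_nhdsWithin_Ioo_right hne hmonoOn hbdd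
    have hlimsup : dirDeriv R.h P v
        = sInf ((fun ε : ℝ => ((Q v ε : ℝ) : EReal)) '' Ioo (0:ℝ) ε₀) := by
      rw [hdirQ]; exact htends.limsup_eq
    refine ⟨ε₀, hε₀, hv, hmono, ?_, ?_⟩
    · rw [hlimsup]; exact htends
    · intro ε hε hε'
      rw [hlimsup]
      exact sInf_le ⟨ε, ⟨hε, hε'⟩, rfl⟩
  -- convexity inequality for the quotients
  have hQconv : ∀ x ∈ T, ∀ y ∈ T, ∀ a b : ℝ, 0 < a → 0 < b → a + b = 1 →
      ∀ᶠ ε in 𝓝[>] (0:ℝ), Q (a • x + b • y) ε ≤ a * Q x ε + b * Q y ε := by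
    rintro x ⟨ex, hex, hmx⟩ y ⟨ey, hey, hmy⟩ a b ha hb hab
    filter_upwards [Ioo_mem_nhdsGT (lt_min hex hey)] with ε hε
    have hε0 : (0:ℝ) < ε := hε.1
    have hxC : P + ε • x ∈ R.C :=
      interior_subset (hmx ε hε.1 (hε.2.trans_le (min_le_left _ _)))
    have hyC : P + ε • y ∈ R.C :=
      interior_subset (hmy ε hε.1 (hε.2.trans_le (min_le_right _ _)))
    have hzpt : P + ε • (a • x + b • y) = a • (P + ε • x) + b • (P + ε • y) := by
      match_scalars <;> simp <;> linarith
    have hcvx := hgconv.2 hxC hyC ha.le hb.le hab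
    rw [← hzpt] at hcvx
    rw [smul_eq_mul, smul_eq_mul] at hcvx
    have hnum : g (P + ε • (a • x + b • y)) - g P
        ≤ a * (g (P + ε • x) - g P) + b * (g (P + ε • y) - g P) := by
      have hsum : a * g P + b * g P = g P := by rw [← add_mul, hab, one_mul]
      linarith
    rw [hQg, hQg, hQg]
    calc (g (P + ε • (a • x + b • y)) - g P) / ε
        ≤ (a * (g (P + ε • x) - g P) + b * (g (P + ε • y) - g P)) / ε := by
          gcongr
      _ = a * ((g (P + ε • x) - g P) / ε) + b * ((g (P + ε • y) - g P) / ε) := by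
          ring
  by_cases hbot : ∀ v ∈ T, dirDeriv R.h P v ≠ ⊥
  · -- finite case : the directional derivative is a real convex function on `T`
    set f : EuclideanSpace ℝ (Fin d) → ℝ := fun v => (dirDeriv R.h P v).toReal with hfdef
    have hcoe : ∀ v ∈ T, ((f v : ℝ) : EReal) = dirDeriv R.h P v := by
      intro v hv
      obtain ⟨ε₀, hε₀, hint, hmono, htd, hle⟩ := key v hv
      have hnt : dirDeriv R.h P v ≠ ⊤ :=
        ne_top_of_le_ne_top (EReal.coe_ne_top _) (hle (ε₀/2) (by positivity) (by linarith))
      exact EReal.coe_toReal hnt (hbot v hv)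
    have htendR : ∀ v ∈ T, Tendsto (fun ε => Q v ε) (𝓝[>] (0:ℝ)) (𝓝 (f v)) := by
      intro v hv
      obtain ⟨ε₀, hε₀, hint, hmono, htd, hle⟩ := key v hv
      rw [← hcoe v hv] at htd
      exact EReal.tendsto_coe.1 htd
    have hfconv : ConvexOn ℝ T f := by
      refine ⟨hTconv, fun x hx y hy a b ha hb hab => ?_⟩
      rcases ha.eq_or_lt with rfl | ha'
      · rw [zero_add] at hab; subst hab; simp
      rcases hb.eq_or_lt with rfl | hb'
      · rw [add_zero] at hab; subst hab; simp
      have hz : a • x + b • y ∈ T := hTconv hx hy ha hb hab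
      have h1 := htendR _ hz
      have h2 := ((htendR x hx).const_mul a).add ((htendR y hy).const_mul b)
      have h3 := hQconv x hx y hy a b ha' hb' hab
      have := le_of_tendsto_of_tendsto h1 h2 h3
      simpa [smul_eq_mul] using this
    have hcont : ContinuousOn f T := hfconv.continuousOn hTopen
    have hcont2 : ContinuousOn (fun v => ((f v : ℝ) : EReal)) T :=
      continuous_coe_real_ereal.comp_continuousOn hcont
    refine ((hcont2.mono hST).congr ?_)
    intro v hv
    exact (hcoe v (hST hv)).symm
  · -- improper case : the directional derivative is `⊥` everywhere on `T`
    push_neg at hbot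
    obtain ⟨v₀, hv₀T, hv₀⟩ := hbot
    have hall : ∀ v ∈ T, dirDeriv R.h P v = ⊥ := by
      intro v hv
      rcases eq_or_ne v v₀ with rfl | hne
      · exact hv₀
      obtain ⟨δ, hδ, hball⟩ := Metric.isOpen_iff.1 hTopen v hv
      have hn : (0:ℝ) < ‖v - v₀‖ := by
        rw [norm_sub_pos_iff]; exact hne
      set t : ℝ := δ / (2 * ‖v - v₀‖) with htdef
      have ht : 0 < t := by positivity
      have hwT : v + t • (v - v₀) ∈ T := by
        apply hball
        rw [Metric.mem_ball, dist_eq_norm]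
        have : v + t • (v - v₀) - v = t • (v - v₀) := by abel
        rw [this, norm_smul, Real.norm_eq_abs, abs_of_pos ht]
        have h2 : t * ‖v - v₀‖ = δ / 2 := by
          rw [htdef]
          field_simp
          try ring
        rw [h2]
        linarith
      set a : ℝ := 1 / (1 + t) with hadef
      set b : ℝ := t / (1 + t) with hbdef
      have h1t : (0:ℝ) < 1 + t := by linarith
      have ha : 0 < a := by positivity
      have hb : 0 < b := by positivity
      have hab : a + b = 1 := by rw [hadef, hbdef]; field_simp
      have hvcomb : a • (v + t • (v - v₀)) + b • v₀ = v := by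
        match_scalars
        · rw [hadef]
          field_simp
        · rw [hadef, hbdef]
          field_simp
          ring
      obtain ⟨εw, hεw, _, hmw, htw, hlew⟩ := key _ hwT
      obtain ⟨ε₁, hε₁, _, _, ht₀, _⟩ := key v₀ hv₀T
      obtain ⟨εv, hεv, _, _, htv, _⟩ := key v hv
      have h3 := hQconv _ hwT v₀ hv₀T a b ha hb hab
      rw [hvcomb] at h3
      have hBw : ∀ᶠ ε in 𝓝[>] (0:ℝ), Q (v + t • (v - v₀)) ε
          ≤ Q (v + t • (v - v₀)) (εw/2) := by
        filter_upwards [Ioo_mem_nhdsGT (half_pos hεw)] with ε hε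
        exact hmw ε (εw/2) hε.1 hε.2.le (by linarith)
      set Bw : ℝ := Q (v + t • (v - v₀)) (εw/2) with hBwdef
      have ht₀' : Tendsto (fun ε : ℝ => ((Q v₀ ε : ℝ) : EReal)) (𝓝[>] (0:ℝ)) (𝓝 ⊥) :=
        hv₀ ▸ ht₀
      have hrhs : Tendsto (fun ε : ℝ => ((a * Bw + b * Q v₀ ε : ℝ) : EReal))
          (𝓝[>] (0:ℝ)) (𝓝 ⊥) := by
        rw [EReal.tendsto_nhds_bot_iff_real]
        intro x
        have hev := (EReal.tendsto_nhds_bot_iff_real.1 ht₀') ((x - a * Bw) / b)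
        filter_upwards [hev] with ε hε
        rw [EReal.coe_lt_coe_iff] at hε ⊢
        have hby : b * ((x - a * Bw) / b) = x - a * Bw := by field_simp
        nlinarith
      have hle2 : ∀ᶠ ε in 𝓝[>] (0:ℝ),
          ((Q v ε : ℝ) : EReal) ≤ ((a * Bw + b * Q v₀ ε : ℝ) : EReal) := by
        filter_upwards [h3, hBw] with ε h3ε hBε
        rw [EReal.coe_le_coe_iff]
        nlinarith
      have := le_of_tendsto_of_tendsto htv hrhs hle2
      exact le_bot_iff.1 this
    refine (continuousOn_const (c := (⊥ : EReal))).congr ?_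
    intro v hv
    exact hall v (hST hv)
end
end

section
/- Let 𝒞 ⊆ ℝ^d be a closed, bounded, convex set containing the origin in its interior, and let h : ℝ^d → [0,+∞] be strictly convex and bounded on 𝒞, equal to +∞ outside 𝒞, with h(0) = 0. Let P ∈ 𝒞 and let 𝕊_P be the set of internal directions at P. Then the set {v ∈ 𝕊_P : D_v h(P) > −∞} is open in 𝕊_P. -/
open MeasureTheory Set Filter Topology
open scoped ENNReal Pointwise

noncomputable section

private lemma seg_toReal {d : ℕ} (R : RelCost d) {x y : EuclideanSpace ℝ (Fin d)}
    (hx : x ∈ R.C) (hy : y ∈ R.C) {t : ℝ} (ht0 : 0 ≤ t) (ht1 : t ≤ 1) :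
    (R.h ((1 - t) • x + t • y)).toReal ≤ (1 - t) * (R.h x).toReal + t * (R.h y).toReal := by
  obtain ⟨M, hM, hMb⟩ := R.h_bddOn
  have hxT : R.h x ≠ ⊤ := ne_top_of_le_ne_top hM (hMb x hx)
  have hyT : R.h y ≠ ⊤ := ne_top_of_le_ne_top hM (hMb y hy)
  rcases eq_or_lt_of_le ht0 with h0 | h0
  · subst h0; simp
  rcases eq_or_lt_of_le ht1 with h1 | h1
  · subst h1; simp
  by_cases hxy : x = y
  · subst hxy
    rw [← add_smul]
    simp only [sub_add_cancel, one_smul]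
    nlinarith [ENNReal.toReal_nonneg (a := R.h x)]
  · have hlt := R.h_strictConvexOn x hx y hy hxy (1 - t) t (by linarith) h0 (by ring)
    have hRT : ENNReal.ofReal (1 - t) * R.h x + ENNReal.ofReal t * R.h y ≠ ⊤ :=
      ENNReal.add_ne_top.2 ⟨ENNReal.mul_ne_top ENNReal.ofReal_ne_top hxT,
        ENNReal.mul_ne_top ENNReal.ofReal_ne_top hyT⟩
    calc (R.h ((1 - t) • x + t • y)).toReal
        ≤ (ENNReal.ofReal (1 - t) * R.h x + ENNReal.ofReal t * R.h y).toReal :=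
          ENNReal.toReal_mono hRT hlt.le
      _ = (1 - t) * (R.h x).toReal + t * (R.h y).toReal := by
          rw [ENNReal.toReal_add (ENNReal.mul_ne_top ENNReal.ofReal_ne_top hxT)
            (ENNReal.mul_ne_top ENNReal.ofReal_ne_top hyT), ENNReal.toReal_mul,
            ENNReal.toReal_mul, ENNReal.toReal_ofReal (by linarith),
            ENNReal.toReal_ofReal ht0]

private lemma dirDeriv_key {d : ℕ} (R : RelCost d) (P : EuclideanSpace ℝ (Fin d))
    (hP : P ∈ R.C) (v : EuclideanSpace ℝ (Fin d)) (hv : IsInternalDir R.C P v)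
    (hdv : ⊥ < dirDeriv R.h P v) :
    ∃ r > (0:ℝ), ∀ w, dist w v < r → IsInternalDir R.C P w → ⊥ < dirDeriv R.h P w := by
  obtain ⟨-, ε₀, hε₀, hint⟩ := hv
  set ε₁ := ε₀ / 2 with hε₁def
  have hε₁ : 0 < ε₁ := by positivity
  have hmemI : P + ε₁ • v ∈ interior R.C := hint ε₁ hε₁ (by simp [hε₁def]; linarith)
  obtain ⟨ρ, hρ, hball⟩ := Metric.mem_nhds_iff.mp (mem_interior_iff_mem_nhds.mp hmemI)
  refine ⟨ρ / ε₁, by positivity, ?_⟩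
  intro w hw hwint
  by_contra hbot
  have hw' : dirDeriv R.h P w = ⊥ := le_bot_iff.mp (not_lt.mp hbot)
  obtain ⟨-, εw, hεw, hintw⟩ := hwint
  set u := (2:ℝ) • v - w with hudef
  have hu₁ : P + ε₁ • u ∈ R.C := by
    apply hball
    rw [Metric.mem_ball, dist_eq_norm]
    have heq : (P + ε₁ • u) - (P + ε₁ • v) = ε₁ • (v - w) := by
      rw [hudef]; module
    rw [heq, norm_smul, Real.norm_eq_abs, abs_of_pos hε₁]
    have : ‖v - w‖ = dist w v := by rw [dist_eq_norm, norm_sub_rev]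
    rw [this]
    calc ε₁ * dist w v < ε₁ * (ρ / ε₁) := by
          exact mul_lt_mul_of_pos_left hw hε₁
      _ = ρ := by field_simp
  set c := (R.h P).toReal with hc
  set h₁ := (R.h (P + ε₁ • u)).toReal with hh₁
  set K := (h₁ - c) / ε₁ with hK
  set δ := min ε₁ εw with hδdef
  have hδ : 0 < δ := lt_min hε₁ hεw
  -- the central convexity inequality for the difference quotients
  have hev : ∀ ε : ℝ, 0 < ε → ε < δ →
      ((R.h (P + ε • v)).toReal - c) / ε ≤
        2⁻¹ * (((R.h (P + ε • w)).toReal - c) / ε) + 2⁻¹ * K := by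
    intro ε hε hεδ
    have hεε₁ : ε < ε₁ := hεδ.trans_le (min_le_left _ _)
    have hwC : P + ε • w ∈ R.C :=
      interior_subset (hintw ε hε (hεδ.trans_le (min_le_right _ _)))
    set t := ε / ε₁ with ht
    have ht0 : 0 < t := by positivity
    have ht1 : t < 1 := (div_lt_one hε₁).2 hεε₁
    have hte : t * ε₁ = ε := div_mul_cancel₀ ε hε₁.ne'
    have heq : (1 - t) • P + t • (P + ε₁ • u) = P + ε • u := by
      rw [← hte]; module
    have huC : P + ε • u ∈ R.C := by
      rw [← heq]
      exact R.convex hP hu₁ (by linarith) ht0.le (by ring)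
    have hA : (R.h (P + ε • u)).toReal ≤ (1 - t) * c + t * h₁ := by
      have := seg_toReal R hP hu₁ ht0.le ht1.le
      rwa [heq] at this
    have hB : (R.h (P + ε • v)).toReal ≤
        2⁻¹ * (R.h (P + ε • w)).toReal + 2⁻¹ * (R.h (P + ε • u)).toReal := by
      have hseg := seg_toReal R hwC huC (t := 2⁻¹) (by norm_num) (by norm_num)
      have heq2 : (1 - 2⁻¹ : ℝ) • (P + ε • w) + (2⁻¹ : ℝ) • (P + ε • u) = P + ε • v := by
        rw [hudef]; module
      rw [heq2] at hseg
      calc (R.h (P + ε • v)).toReal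
          ≤ (1 - 2⁻¹) * (R.h (P + ε • w)).toReal + 2⁻¹ * (R.h (P + ε • u)).toReal := hseg
        _ = 2⁻¹ * (R.h (P + ε • w)).toReal + 2⁻¹ * (R.h (P + ε • u)).toReal := by norm_num
    rw [div_le_iff₀ hε]
    have hexp : (2⁻¹ * (((R.h (P + ε • w)).toReal - c) / ε) + 2⁻¹ * K) * ε
        = 2⁻¹ * ((R.h (P + ε • w)).toReal - c) + 2⁻¹ * (K * ε) := by
      field_simp
    have hKε : K * ε = t * (h₁ - c) := by
      rw [hK, ht]; field_simp
    have hexpand : t * (h₁ - c) = t * h₁ - t * c := by ring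
    linarith
  -- the difference quotient at `w` tends to `-∞`
  have hQwb : ∀ b : ℝ, ∀ᶠ ε in 𝓝[>] (0:ℝ),
      ((R.h (P + ε • w)).toReal - c) / ε < b := by
    intro b
    have hls : Filter.limsup
        (fun ε : ℝ => ((((R.h (P + ε • w)).toReal - (R.h P).toReal) / ε : ℝ) : EReal))
        (𝓝[>] 0) < (b : EReal) := by
      have : dirDeriv R.h P w < (b : EReal) := by
        rw [hw']; exact bot_lt_iff_ne_bot.2 (EReal.coe_ne_bot b)
      exact this
    filter_upwards [eventually_lt_of_limsup_lt hls] with ε hε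
    rw [← hc] at hε
    exact_mod_cast hε
  -- hence so does the one at `v`, contradicting `hdv`
  have htend : Tendsto
      (fun ε : ℝ => ((((R.h (P + ε • v)).toReal - (R.h P).toReal) / ε : ℝ) : EReal))
      (𝓝[>] (0:ℝ)) (𝓝 ⊥) := by
    rw [EReal.tendsto_nhds_bot_iff_real]
    intro x
    have hmem : Ioo (0:ℝ) δ ∈ 𝓝[>] (0:ℝ) := Ioo_mem_nhdsGT_of_mem ⟨le_refl _, hδ⟩
    filter_upwards [hmem, hQwb (2 * x - K - 2)] with ε hεI hQw
    have h1 := hev ε hεI.1 hεI.2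
    rw [← hc]
    exact_mod_cast lt_of_le_of_lt h1 (by linarith)
  exact hdv.ne' htend.limsup_eq

/-- The set of internal directions at `P` along which the directional derivative of `h`
is not `-∞` is relatively open in the set `𝕊_P` of internal directions at `P`. -/
theorem isOpen_dirDeriv_ne_bot {d : ℕ} (R : RelCost d)
    (P : EuclideanSpace ℝ (Fin d)) (hP : P ∈ R.C) :
    ∃ U : Set (EuclideanSpace ℝ (Fin d)), IsOpen U ∧
      {v | IsInternalDir R.C P v ∧ ⊥ < dirDeriv R.h P v} =
        U ∩ {v | IsInternalDir R.C P v} := by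
  have key := dirDeriv_key R P hP
  choose r hr hloc using key
  refine ⟨⋃ (v) (hv : IsInternalDir R.C P v) (hdv : ⊥ < dirDeriv R.h P v),
      Metric.ball v (r v hv hdv),
    isOpen_iUnion fun _ => isOpen_iUnion fun _ => isOpen_iUnion fun _ => Metric.isOpen_ball, ?_⟩
  ext w
  simp only [mem_inter_iff, mem_setOf_eq, mem_iUnion]
  constructor
  · rintro ⟨hwI, hwd⟩
    exact ⟨⟨w, hwI, hwd, Metric.mem_ball_self (hr w hwI hwd)⟩, hwI⟩
  · rintro ⟨⟨v, hv, hdv, hwb⟩, hwS⟩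
    exact ⟨hwS, hloc v hv hdv w (Metric.mem_ball.mp hwb) hwS⟩
end
end

section
/- (Chain Lemma) Let μ, ν be probability measures on ℝ^d, let γ, γ′ ∈ Π(μ,ν), let γ₀ be a nonzero measure with γ₀ ≤ γ, and set μ₀ = π₁γ₀, ν₀ = π₂γ₀. Then there exist N ∈ ℕ and ε̄ > 0 such that for every 0 < ε ≤ ε̄ there are measures γ̃ ≤ γ and γ̃′ ≤ γ′ and measures μ̃, ν̃, μ_A, ν_A, ν_B satisfying: π₁γ̃ = π₁γ̃′ = μ̃ + μ_A; π₂γ̃ = ν̃ + ν_A; π₂γ̃′ = ν̃ + ν_B; μ_A ≤ μ₀; μ̃ ≤ μ − μ₀; ν_A ≤ ν₀ and ν_B ≤ ν₀; ν̃ and ν₀ are mutually singular (ν̃ ∧ ν₀ = 0); ‖γ̃‖ = ‖γ̃′‖ = (N+1)ε; ‖μ̃‖ = ‖ν̃‖ = Nε; ‖μ_A‖ = ‖ν_A‖ = ‖ν_B‖ = ε. Moreover γ̃ decomposes as γ̃ = γ̃₀ + γ̃_∞ with γ̃₀ ≤ γ₀, γ̃_∞ ≤ γ − γ₀, π₁γ̃₀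 = μ_A, π₂γ̃₀ = ν_A, π₁γ̃_∞ = μ̃, π₂γ̃_∞ = ν̃. -/
open MeasureTheory Set Filter Topology
open scoped ENNReal Pointwise

noncomputable section

namespace ChainAux

variable {X Y : Type*} [MeasurableSpace X] [MeasurableSpace Y]

lemma meas_le_iff {ρ σ : Measure X} : ρ ≤ σ ↔ ∀ s, ρ s ≤ σ s := Measure.le_iff'

lemma smul_le_self {t : ℝ≥0∞} (ht : t ≤ 1) (ρ : Measure X) : t • ρ ≤ ρ :=
  meas_le_iff.2 fun s => by
    simpa using mul_le_of_le_one_left (zero_le) ht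

lemma smul_mono_meas {c : ℝ≥0∞} {a b : Measure X} (h : a ≤ b) : c • a ≤ c • b :=
  meas_le_iff.2 fun s => by
    simpa using mul_le_mul_right (meas_le_iff.1 h s) c

lemma smul_mono_scalar {c d : ℝ≥0∞} {a : Measure X} (h : c ≤ d) : c • a ≤ d • a :=
  meas_le_iff.2 fun s => by
    simpa using mul_le_mul_left h (a s)

lemma finite_of_le (ρ σ : Measure X) [IsFiniteMeasure σ] (h : ρ ≤ σ) :
    IsFiniteMeasure ρ :=
  ⟨lt_of_le_of_lt (meas_le_iff.1 h univ) (measure_lt_top σ univ)⟩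

lemma finite_of_le_smul {ρ σ : Measure X} [IsFiniteMeasure σ] {c : ℝ≥0∞} (hc : c ≠ ∞)
    (h : ρ ≤ c • σ) : IsFiniteMeasure ρ :=
  ⟨lt_of_le_of_lt (meas_le_iff.1 h univ) (by
    simp only [Measure.smul_apply, smul_eq_mul]
    exact ENNReal.mul_lt_top hc.lt_top (measure_lt_top σ univ))⟩

lemma map_univ (Θ : Measure X) {g : X → Y} (hg : Measurable g) :
    (Θ.map g) univ = Θ univ := by
  rw [Measure.map_apply hg MeasurableSet.univ, preimage_univ]

lemma map_withDensity (Γ : Measure X) {g : X → Y} (hg : Measurable g)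
    {w : Y → ℝ≥0∞} (hw : Measurable w) :
    (Γ.withDensity (fun z => w (g z))).map g = (Γ.map g).withDensity w := by
  ext s hs
  rw [Measure.map_apply hg hs, withDensity_apply _ (hg hs), withDensity_apply _ hs,
    setLIntegral_map hs hw hg]

/-- Sub-measure of a product measure with prescribed first marginal. -/
def sub1 (Γ : Measure (X × Y)) (m : Measure X) : Measure (X × Y) :=
  Γ.withDensity (fun p => m.rnDeriv (Γ.map Prod.fst) p.1)

/-- Sub-measure of a product measure with prescribed second marginal. -/
def sub2 (Γ : Measure (X × Y)) (q : Measure Y) : Measure (X × Y) :=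
  Γ.withDensity (fun p => q.rnDeriv (Γ.map Prod.snd) p.2)

lemma sub1_map_fst (Γ : Measure (X × Y)) (m : Measure X) [IsFiniteMeasure Γ]
    [IsFiniteMeasure m] (h : m ≪ Γ.map Prod.fst) : (sub1 Γ m).map Prod.fst = m := by
  haveI : IsFiniteMeasure (Γ.map Prod.fst) := Measure.isFiniteMeasure_map Γ Prod.fst
  rw [sub1, map_withDensity Γ measurable_fst (Measure.measurable_rnDeriv _ _),
    Measure.withDensity_rnDeriv_eq _ _ h]

lemma sub2_map_snd (Γ : Measure (X × Y)) (q : Measure Y) [IsFiniteMeasure Γ]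
    [IsFiniteMeasure q] (h : q ≪ Γ.map Prod.snd) : (sub2 Γ q).map Prod.snd = q := by
  haveI : IsFiniteMeasure (Γ.map Prod.snd) := Measure.isFiniteMeasure_map Γ Prod.snd
  rw [sub2, map_withDensity Γ measurable_snd (Measure.measurable_rnDeriv _ _),
    Measure.withDensity_rnDeriv_eq _ _ h]

lemma rnDeriv_le_const {m base : Measure X} [IsFiniteMeasure base] {c : ℝ≥0∞}
    (hc0 : c ≠ 0) (hctop : c ≠ ∞) (h : m ≤ c • base) :
    ∀ᵐ x ∂base, m.rnDeriv base x ≤ c := by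
  haveI : IsFiniteMeasure m := finite_of_le_smul hctop h
  have h1 : c⁻¹ • m ≤ base := by
    have := smul_mono_meas (c := c⁻¹) h
    rwa [smul_smul, ENNReal.inv_mul_cancel hc0 hctop, one_smul] at this
  have h2 := Measure.rnDeriv_le_one_of_le h1
  have h3 := Measure.rnDeriv_smul_left_of_ne_top m base
    (r := c⁻¹) (ENNReal.inv_ne_top.2 hc0)
  filter_upwards [h2, h3] with x hx2 hx3
  rw [hx3] at hx2
  have : c⁻¹ * m.rnDeriv base x ≤ 1 := by simpa using hx2
  calc m.rnDeriv base x = c * (c⁻¹ * m.rnDeriv base x) := by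
        rw [← mul_assoc, ENNReal.mul_inv_cancel hc0 hctop, one_mul]
    _ ≤ c * 1 := mul_le_mul_right this c
    _ = c := mul_one c

lemma sub1_le (Γ : Measure (X × Y)) (m : Measure X) [IsFiniteMeasure Γ] {c : ℝ≥0∞}
    (hc0 : c ≠ 0) (hctop : c ≠ ∞) (h : m ≤ c • Γ.map Prod.fst) :
    sub1 Γ m ≤ c • Γ := by
  haveI : IsFiniteMeasure (Γ.map Prod.fst) := Measure.isFiniteMeasure_map Γ Prod.fst
  have hae := rnDeriv_le_const hc0 hctop h
  obtain ⟨N, hN1, hN2, hN3⟩ := exists_measurable_superset_of_null (ae_iff.1 hae)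
  have hΓN : Γ {p : X × Y | p.1 ∈ N} = 0 := by
    have : {p : X × Y | p.1 ∈ N} = Prod.fst ⁻¹' N := rfl
    rw [this, ← Measure.map_apply measurable_fst hN2, hN3]
  have hΓae : ∀ᵐ p ∂Γ, m.rnDeriv (Γ.map Prod.fst) p.1 ≤ c := by
    rw [ae_iff]
    exact measure_mono_null (fun p hp => hN1 hp) hΓN
  calc sub1 Γ m ≤ Γ.withDensity (fun _ => c) := withDensity_mono hΓae
    _ = c • Γ := withDensity_const c

lemma sub2_le (Γ : Measure (X × Y)) (q : Measure Y) [IsFiniteMeasure Γ] {c : ℝ≥0∞}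
    (hc0 : c ≠ 0) (hctop : c ≠ ∞) (h : q ≤ c • Γ.map Prod.snd) :
    sub2 Γ q ≤ c • Γ := by
  haveI : IsFiniteMeasure (Γ.map Prod.snd) := Measure.isFiniteMeasure_map Γ Prod.snd
  have hae := rnDeriv_le_const hc0 hctop h
  obtain ⟨N, hN1, hN2, hN3⟩ := exists_measurable_superset_of_null (ae_iff.1 hae)
  have hΓN : Γ {p : X × Y | p.2 ∈ N} = 0 := by
    have : {p : X × Y | p.2 ∈ N} = Prod.snd ⁻¹' N := rfl
    rw [this, ← Measure.map_apply measurable_snd hN2, hN3]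
  have hΓae : ∀ᵐ p ∂Γ, q.rnDeriv (Γ.map Prod.snd) p.2 ≤ c := by
    rw [ae_iff]
    exact measure_mono_null (fun p hp => hN1 hp) hΓN
  calc sub2 Γ q ≤ Γ.withDensity (fun _ => c) := withDensity_mono hΓae
    _ = c • Γ := withDensity_const c

/-- Trim a measure to have bounded density with respect to a dominating measure. -/
lemma trim_lemma (ρ β : Measure X) [IsFiniteMeasure ρ] [IsFiniteMeasure β]
    (hne : ρ ≠ 0) (hac : ρ ≪ β) :
    ∃ ρ' : Measure X, ρ' ≠ 0 ∧ ρ' ≤ ρ ∧ ∃ n : ℕ, n ≠ 0 ∧ ρ' ≤ (n : ℝ≥0∞) • β := by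
  set r := ρ.rnDeriv β with hr
  have hrm : Measurable r := Measure.measurable_rnDeriv ρ β
  have hρeq : β.withDensity r = ρ := Measure.withDensity_rnDeriv_eq _ _ hac
  have hβinf : β {x | r x = ∞} = 0 := by
    have := Measure.rnDeriv_lt_top ρ β
    rw [ae_iff] at this
    simpa [not_lt, top_le_iff] using this
  have hρinf : ρ {x | r x = ∞} = 0 := hac hβinf
  have hcover : {x | r x ≠ ∞} ⊆ ⋃ n : ℕ, {x | r x ≤ (n : ℝ≥0∞)} := by
    intro x hx
    obtain ⟨n, hn⟩ := ENNReal.exists_nat_gt hx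
    exact mem_iUnion.2 ⟨n, hn.le⟩
  have hex : ∃ n : ℕ, ρ {x | r x ≤ (n : ℝ≥0∞)} ≠ 0 := by
    by_contra hno
    push_neg at hno
    have h1 : ρ (⋃ n : ℕ, {x | r x ≤ (n : ℝ≥0∞)}) = 0 := measure_iUnion_null hno
    have h2 : ρ univ ≤ ρ {x | r x = ∞} + ρ {x | r x ≠ ∞} := by
      refine le_trans (measure_mono ?_) (measure_union_le _ _)
      intro x _
      by_cases hx : r x = ∞
      · exact Or.inl hx
      · exact Or.inr hx
    have h3 : ρ {x | r x ≠ ∞} = 0 :=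
      le_antisymm (le_trans (measure_mono hcover) h1.le) (zero_le)
    rw [hρinf, h3, add_zero] at h2
    exact (Measure.measure_univ_ne_zero.2 hne) (le_antisymm h2 (zero_le))
  obtain ⟨n, hn⟩ := hex
  have hSm : MeasurableSet {x | r x ≤ (n : ℝ≥0∞)} := hrm measurableSet_Iic
  refine ⟨ρ.restrict {x | r x ≤ (n : ℝ≥0∞)}, ?_, Measure.restrict_le_self, n + 1, by simp, ?_⟩
  · rw [← Measure.measure_univ_ne_zero, Measure.restrict_apply MeasurableSet.univ, univ_inter]
    exact hn
  · rw [meas_le_iff]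
    intro s
    rw [Measure.restrict_apply' hSm]
    calc ρ (s ∩ {x | r x ≤ (n : ℝ≥0∞)})
        = ∫⁻ x in s ∩ {x | r x ≤ (n : ℝ≥0∞)}, r x ∂β := by
          rw [← hρeq, withDensity_apply']
      _ ≤ ∫⁻ _ in s ∩ {x | r x ≤ (n : ℝ≥0∞)}, (n : ℝ≥0∞) ∂β := by
          refine setLIntegral_mono measurable_const (fun x hx => hx.2)
      _ = (n : ℝ≥0∞) * β (s ∩ {x | r x ≤ (n : ℝ≥0∞)}) := setLIntegral_const _ _
      _ ≤ ((n + 1 : ℕ) : ℝ≥0∞) * β s := by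
          refine mul_le_mul ?_ (measure_mono inter_subset_left) (zero_le) (zero_le)
          exact_mod_cast Nat.le_succ n
      _ = (((n + 1 : ℕ) : ℝ≥0∞) • β) s := rfl

/-- A measure concentrated on the carrier of `β` and a.c. w.r.t. the base is a.c. w.r.t. `β`. -/
lemma ac_of_concentrated (base β ρ : Measure X) [IsFiniteMeasure base] [IsFiniteMeasure β]
    (hβ : β ≪ base) (hρ : ρ ≪ base)
    (hconc : ρ ({x | 0 < β.rnDeriv base x}ᶜ) = 0) : ρ ≪ β := by
  set b := β.rnDeriv base with hb
  have hbm : Measurable b := Measure.measurable_rnDeriv β base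
  refine Measure.AbsolutelyContinuous.mk fun s hs hs0 => ?_
  have h1 : ∫⁻ x in s, b x ∂base = 0 := by
    rw [← withDensity_apply _ hs, Measure.withDensity_rnDeriv_eq _ _ hβ]
    exact hs0
  have h2 : ∀ᵐ x ∂base.restrict s, b x = 0 := (lintegral_eq_zero_iff hbm).1 h1
  have h3 : ∀ᵐ x ∂base, x ∈ s → b x = 0 := (ae_restrict_iff' hs).1 h2
  have h4 : base (s ∩ {x | 0 < b x}) = 0 := by
    rw [ae_iff] at h3
    refine measure_mono_null (fun x hx => ?_) h3
    simp only [mem_inter_iff, mem_setOf_eq] at hx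
    simp only [mem_setOf_eq, not_forall]
    exact ⟨hx.1, (pos_iff_ne_zero.1 hx.2)⟩
  have h5 : ρ (s ∩ {x | 0 < b x}) = 0 := hρ h4
  have h6 : ρ (s \ {x | 0 < b x}) = 0 :=
    measure_mono_null (fun x hx => hx.2) hconc
  refine le_antisymm ?_ (zero_le)
  calc ρ s ≤ ρ (s ∩ {x | 0 < b x}) + ρ (s \ {x | 0 < b x}) := by
        refine le_trans (measure_mono ?_) (measure_union_le _ _)
        intro x hx
        by_cases hxb : x ∈ {x | 0 < b x}
        · exact Or.inl ⟨hx, hxb⟩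
        · exact Or.inr ⟨hx, hxb⟩
    _ = 0 := by rw [h5, h6, add_zero]

/-- A measure gives no mass outside the carrier of its density. -/
lemma null_off_carrier (σ base : Measure X) [IsFiniteMeasure base] [IsFiniteMeasure σ]
    (hac : σ ≪ base) : σ ({x | 0 < σ.rnDeriv base x}ᶜ) = 0 := by
  have hrm : Measurable (σ.rnDeriv base) := Measure.measurable_rnDeriv σ base
  have hmeas : MeasurableSet {x | 0 < σ.rnDeriv base x} :=
    (hrm measurableSet_Ioi : MeasurableSet {x | 0 < σ.rnDeriv base x})
  have key : ∫⁻ x in {x | 0 < σ.rnDeriv base x}ᶜ, σ.rnDeriv base x ∂base = 0 := by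
    rw [setLIntegral_congr_fun hmeas.compl
      (fun x hx => by
        simpa [pos_iff_ne_zero, not_not] using (hx : x ∈ {x | 0 < σ.rnDeriv base x}ᶜ))]
    simp
  calc σ {x | 0 < σ.rnDeriv base x}ᶜ
      = (base.withDensity (σ.rnDeriv base)) {x | 0 < σ.rnDeriv base x}ᶜ := by
        rw [Measure.withDensity_rnDeriv_eq _ _ hac]
    _ = ∫⁻ x in {x | 0 < σ.rnDeriv base x}ᶜ, σ.rnDeriv base x ∂base :=
        withDensity_apply _ hmeas.compl
    _ = 0 := key

lemma pos_inter (base ρ : Measure X) [IsFiniteMeasure base] [IsFiniteMeasure ρ]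
    (hac : ρ ≪ base) {S : Set X} (hS : MeasurableSet S) (hpos : ρ S ≠ 0) :
    base (S ∩ {x | 0 < ρ.rnDeriv base x}) ≠ 0 := by
  set r := ρ.rnDeriv base
  have hrm : Measurable r := Measure.measurable_rnDeriv ρ base
  have h1 : ρ S = ∫⁻ x in S, r x ∂base := by
    rw [← Measure.withDensity_rnDeriv_eq _ _ hac, withDensity_apply _ hS]
  rw [h1] at hpos
  have h2 : 0 < ∫⁻ x, r x ∂(base.restrict S) := pos_iff_ne_zero.2 hpos
  rw [lintegral_pos_iff_support hrm, Measure.restrict_apply (measurableSet_support hrm)] at h2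
  have : Function.support r ∩ S = S ∩ {x | 0 < r x} := by
    ext x
    simp only [Function.mem_support, mem_inter_iff, mem_setOf_eq, pos_iff_ne_zero]
    tauto
  rw [this] at h2
  exact h2.ne'

lemma exists_min (base ρ σ : Measure X) [IsFiniteMeasure base]
    [IsFiniteMeasure ρ] [IsFiniteMeasure σ]
    (hρ : ρ ≪ base) (hσ : σ ≪ base)
    (hpos : base ({x | 0 < ρ.rnDeriv base x} ∩ {x | 0 < σ.rnDeriv base x}) ≠ 0) :
    ∃ ω : Measure X, ω ≠ 0 ∧ ω ≤ ρ ∧ ω ≤ σ := by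
  set f := ρ.rnDeriv base
  set g := σ.rnDeriv base
  have hfm : Measurable f := Measure.measurable_rnDeriv ρ base
  have hgm : Measurable g := Measure.measurable_rnDeriv σ base
  refine ⟨base.withDensity (fun x => min (f x) (g x)), ?_, ?_, ?_⟩
  · rw [← Measure.measure_univ_ne_zero, withDensity_apply _ MeasurableSet.univ,
      Measure.restrict_univ]
    have hmin : Measurable (fun x => min (f x) (g x)) := hfm.min hgm
    rw [← pos_iff_ne_zero, lintegral_pos_iff_support hmin]
    have hsub : {x | 0 < f x} ∩ {x | 0 < g x} ⊆ Function.support (fun x => min (f x) (g x)) := by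
      intro x hx
      simp only [mem_inter_iff, mem_setOf_eq] at hx
      exact (lt_min hx.1 hx.2).ne'
    exact lt_of_lt_of_le (pos_iff_ne_zero.2 hpos) (measure_mono hsub)
  · calc base.withDensity (fun x => min (f x) (g x)) ≤ base.withDensity f :=
        withDensity_mono (ae_of_all _ fun x => min_le_left _ _)
      _ = ρ := Measure.withDensity_rnDeriv_eq _ _ hρ
  · calc base.withDensity (fun x => min (f x) (g x)) ≤ base.withDensity g :=
        withDensity_mono (ae_of_all _ fun x => min_le_right _ _)
      _ = σ := Measure.withDensity_rnDeriv_eq _ _ hσ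


lemma map_fst_restrict (Γ : Measure (X × Y)) (Zs : Set Y) {E : Set X}
    (hE : MeasurableSet E) :
    ((Γ.restrict (univ ×ˢ Zs)).map Prod.fst) E = Γ (E ×ˢ Zs) := by
  rw [Measure.map_apply measurable_fst hE, Measure.restrict_apply (measurable_fst hE)]
  congr 1
  ext ⟨x, y⟩
  simp [Set.mem_prod, and_comm]

lemma map_snd_restrict (Γ : Measure (X × Y)) (As : Set X) {F : Set Y}
    (hF : MeasurableSet F) :
    ((Γ.restrict (As ×ˢ univ)).map Prod.snd) F = Γ (As ×ˢ F) := by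
  rw [Measure.map_apply measurable_snd hF, Measure.restrict_apply (measurable_snd hF)]
  congr 1
  ext ⟨x, y⟩
  simp [Set.mem_prod, and_comm]

lemma map_fst_restrict2 (Γ : Measure (X × Y)) (As : Set X) {E : Set X}
    (hE : MeasurableSet E) :
    ((Γ.restrict (As ×ˢ univ)).map Prod.fst) E = Γ ((E ∩ As) ×ˢ univ) := by
  rw [Measure.map_apply measurable_fst hE, Measure.restrict_apply (measurable_fst hE)]
  congr 1
  ext ⟨x, y⟩
  simp [Set.mem_prod]

lemma map_snd_restrict2 (Γ : Measure (X × Y)) (Zs : Set Y) {F : Set Y}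
    (hF : MeasurableSet F) :
    ((Γ.restrict (univ ×ˢ Zs)).map Prod.snd) F = Γ (univ ×ˢ (F ∩ Zs)) := by
  rw [Measure.map_apply measurable_snd hF, Measure.restrict_apply (measurable_snd hF)]
  congr 1
  ext ⟨x, y⟩
  simp [Set.mem_prod]

lemma map_finset_sum {ι : Type*} (s : Finset ι) (κ : ι → Measure X)
    {g : X → Y} (hg : Measurable g) :
    ((∑ j ∈ s, κ j).map g) = ∑ j ∈ s, (κ j).map g := by
  ext t ht
  rw [Measure.map_apply hg ht, Measure.finset_sum_apply, Measure.finset_sum_apply]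
  exact Finset.sum_congr rfl fun j _ => (Measure.map_apply hg ht).symm

lemma sum_le_smul {ι : Type*} (s : Finset ι) (κ : ι → Measure X) (c : ℝ≥0∞)
    (X0 : Measure X) (h : ∀ j ∈ s, κ j ≤ c • X0) :
    (∑ j ∈ s, κ j) ≤ ((s.card : ℝ≥0∞) * c) • X0 := by
  refine meas_le_iff.2 fun t => ?_
  rw [Measure.finset_sum_apply]
  calc ∑ j ∈ s, (κ j) t ≤ ∑ _j ∈ s, c * X0 t :=
        Finset.sum_le_sum (fun j hj => by simpa using meas_le_iff.1 (h j hj) t)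
    _ = s.card * (c * X0 t) := by rw [Finset.sum_const, nsmul_eq_mul]
    _ = (((s.card : ℝ≥0∞) * c) • X0) t := by
        simp [Measure.smul_apply, mul_assoc]


/-! ### Reachability sets -/

def alphaM (γ' : Measure (X × Y)) (Zs : Set Y) : Measure X :=
  (γ'.restrict (univ ×ˢ Zs)).map Prod.fst

def Aset (γ γ' : Measure (X × Y)) (Zs : Set Y) : Set X :=
  {x | 0 < (alphaM γ' Zs).rnDeriv (γ.map Prod.fst) x}

def betaM (γ γ₀ : Measure (X × Y)) (As : Set X) : Measure Y :=
  ((γ - γ₀).restrict (As ×ˢ univ)).map Prod.snd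

def Bset (γ γ₀ : Measure (X × Y)) (As : Set X) : Set Y :=
  {y | 0 < (betaM γ γ₀ As).rnDeriv (γ.map Prod.snd) y}

def Zseq (γ γ' γ₀ : Measure (X × Y)) : ℕ → Set Y
  | 0 => {y | 0 < (γ₀.map Prod.snd).rnDeriv (γ.map Prod.snd) y}
  | k+1 => Zseq γ γ' γ₀ k ∪ Bset γ γ₀ (Aset γ γ' (Zseq γ γ' γ₀ k))

lemma Aset_meas (γ γ' : Measure (X × Y)) (Zs : Set Y) : MeasurableSet (Aset γ γ' Zs) :=
  ((Measure.measurable_rnDeriv _ _) measurableSet_Ioi :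
    MeasurableSet {x | 0 < (alphaM γ' Zs).rnDeriv (γ.map Prod.fst) x})

lemma Bset_meas (γ γ₀ : Measure (X × Y)) (As : Set X) : MeasurableSet (Bset γ γ₀ As) :=
  ((Measure.measurable_rnDeriv _ _) measurableSet_Ioi :
    MeasurableSet {y | 0 < (betaM γ γ₀ As).rnDeriv (γ.map Prod.snd) y})

lemma Zseq_meas (γ γ' γ₀ : Measure (X × Y)) : ∀ k, MeasurableSet (Zseq γ γ' γ₀ k)
  | 0 => ((Measure.measurable_rnDeriv _ _) measurableSet_Ioi :
      MeasurableSet {y | 0 < (γ₀.map Prod.snd).rnDeriv (γ.map Prod.snd) y})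
  | (k+1) => (Zseq_meas γ γ' γ₀ k).union (Bset_meas γ γ₀ _)

lemma Zseq_cover (γ γ' γ₀ : Measure (X × Y)) : ∀ k,
    Zseq γ γ' γ₀ k ⊆ Zseq γ γ' γ₀ 0 ∪
      ⋃ j, ⋃ (_ : j < k), Bset γ γ₀ (Aset γ γ' (Zseq γ γ' γ₀ j))
  | 0 => subset_union_left
  | (k+1) => by
      intro y hy
      rcases hy with hy | hy
      · rcases Zseq_cover γ γ' γ₀ k hy with h | h
        · exact Or.inl h
        · refine Or.inr ?_
          obtain ⟨j, hj⟩ := mem_iUnion.1 h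
          obtain ⟨hjk, hyj⟩ := mem_iUnion.1 hj
          exact mem_iUnion.2 ⟨j, mem_iUnion.2 ⟨Nat.lt_succ_of_lt hjk, hyj⟩⟩
      · exact Or.inr (mem_iUnion.2 ⟨k, mem_iUnion.2 ⟨Nat.lt_succ_self k, hy⟩⟩)

section Termination

variable (γ γ' γ₀ : Measure (X × Y)) [IsFiniteMeasure γ] [IsFiniteMeasure γ']
  [IsFiniteMeasure γ₀]

lemma alphaM_le (hfst : γ'.map Prod.fst = γ.map Prod.fst) (Zs : Set Y) :
    alphaM γ' Zs ≤ γ.map Prod.fst := by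
  rw [← hfst]
  exact Measure.map_mono Measure.restrict_le_self measurable_fst

lemma betaM_le (h0 : γ₀ ≤ γ) (As : Set X) : betaM γ γ₀ As ≤ γ.map Prod.snd :=
  Measure.map_mono (Measure.restrict_le_self.trans Measure.sub_le) measurable_snd

theorem exists_overlap (h0 : γ₀ ≤ γ) (hne : γ₀ ≠ 0)
    (hfst : γ'.map Prod.fst = γ.map Prod.fst)
    (hsnd : γ'.map Prod.snd = γ.map Prod.snd) :
    ∃ k, (γ₀.map Prod.fst) (Aset γ γ' (Zseq γ γ' γ₀ k)) ≠ 0 := by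
  by_contra hcon
  push_neg at hcon
  haveI : IsFiniteMeasure (γ - γ₀) := finite_of_le _ _ Measure.sub_le
  set A : ℕ → Set X := fun k => Aset γ γ' (Zseq γ γ' γ₀ k) with hA
  set Z : ℕ → Set Y := fun k => Zseq γ γ' γ₀ k with hZ
  have hAm : ∀ k, MeasurableSet (A k) := fun k => Aset_meas γ γ' _
  have hZm : ∀ k, MeasurableSet (Z k) := fun k => Zseq_meas γ γ' γ₀ k
  set 𝒜 : Set X := ⋃ k, A k with h𝒜
  set 𝒵 : Set Y := ⋃ k, Z k with h𝒵
  have h𝒜m : MeasurableSet 𝒜 := MeasurableSet.iUnion hAm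
  have h𝒵m : MeasurableSet 𝒵 := MeasurableSet.iUnion hZm
  -- γ₀ gives no mass to 𝒜 × univ
  have hγ₀A : γ₀ (𝒜 ×ˢ (univ : Set Y)) = 0 := by
    have h1 : (γ₀.map Prod.fst) 𝒜 = 0 := measure_iUnion_null hcon
    rw [Measure.map_apply measurable_fst h𝒜m] at h1
    rw [← h1]
    congr 1
    ext ⟨x, y⟩; simp
  -- γ₀ gives no mass to univ × 𝒵ᶜ
  have hγ₀Z : γ₀ ((univ : Set X) ×ˢ 𝒵ᶜ) = 0 := by
    have hsub : (univ : Set X) ×ˢ 𝒵ᶜ ⊆ (univ : Set X) ×ˢ (Z 0)ᶜ := by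
      refine prod_mono_right (compl_subset_compl.2 ?_)
      exact subset_iUnion Z 0
    refine measure_mono_null hsub ?_
    have hmap : γ₀ ((univ : Set X) ×ˢ (Z 0)ᶜ) = (γ₀.map Prod.snd) ((Z 0)ᶜ) := by
      rw [Measure.map_apply measurable_snd (hZm 0).compl]
      congr 1
      ext ⟨x, y⟩; simp
    rw [hmap]
    haveI : IsFiniteMeasure (γ.map Prod.snd) := Measure.isFiniteMeasure_map γ Prod.snd
    haveI : IsFiniteMeasure (γ₀.map Prod.snd) := Measure.isFiniteMeasure_map γ₀ Prod.snd
    exact null_off_carrier (γ₀.map Prod.snd) (γ.map Prod.snd)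
      ((Measure.map_mono h0 measurable_snd).absolutelyContinuous)
  -- γ gives no mass to 𝒜 × 𝒵ᶜ
  have hγAZ : γ (𝒜 ×ˢ 𝒵ᶜ) = 0 := by
    have hsub : 𝒜 ×ˢ 𝒵ᶜ ⊆ ⋃ k, (A k) ×ˢ (Z (k+1))ᶜ := by
      rintro ⟨x, y⟩ ⟨hx, hy⟩
      obtain ⟨k, hk⟩ := mem_iUnion.1 hx
      refine mem_iUnion.2 ⟨k, ⟨hk, fun hmem => hy (mem_iUnion.2 ⟨k+1, hmem⟩)⟩⟩
    refine measure_mono_null hsub (measure_iUnion_null fun k => ?_)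
    have hdecomp : γ ((A k) ×ˢ (Z (k+1))ᶜ) =
        (γ - γ₀) ((A k) ×ˢ (Z (k+1))ᶜ) + γ₀ ((A k) ×ˢ (Z (k+1))ᶜ) := by
      conv_lhs => rw [← Measure.sub_add_cancel_of_le h0]
      rw [Measure.add_apply]
    rw [hdecomp]
    have hz : γ₀ ((A k) ×ˢ (Z (k+1))ᶜ) = 0 := by
      refine measure_mono_null (prod_mono_right (subset_univ _)) ?_
      have : γ₀ ((A k) ×ˢ (univ : Set Y)) = (γ₀.map Prod.fst) (A k) := by
        rw [Measure.map_apply measurable_fst (hAm k)]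
        congr 1
        ext ⟨x, y⟩; simp
      rw [this]
      exact hcon k
    have hz2 : (γ - γ₀) ((A k) ×ˢ (Z (k+1))ᶜ) = 0 := by
      have hBsub : (Z (k+1))ᶜ ⊆ (Bset γ γ₀ (A k))ᶜ := by
        refine compl_subset_compl.2 ?_
        intro y hy
        exact Or.inr hy
      refine measure_mono_null (prod_mono_right hBsub) ?_
      have heq : (γ - γ₀) ((A k) ×ˢ (Bset γ γ₀ (A k))ᶜ) =
          (betaM γ γ₀ (A k)) ((Bset γ γ₀ (A k))ᶜ) :=
        (map_snd_restrict (γ - γ₀) (A k) (Bset_meas γ γ₀ (A k)).compl).symm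
      rw [heq]
      haveI : IsFiniteMeasure (γ.map Prod.snd) := Measure.isFiniteMeasure_map γ Prod.snd
      haveI : IsFiniteMeasure (betaM γ γ₀ (A k)) := by
        refine finite_of_le _ (γ.map Prod.snd) (betaM_le γ γ₀ h0 (A k))
      exact null_off_carrier (betaM γ γ₀ (A k)) (γ.map Prod.snd)
        ((betaM_le γ γ₀ h0 (A k)).absolutelyContinuous)
    rw [hz, hz2, add_zero]
  -- γ' gives no mass to 𝒜ᶜ × 𝒵
  have hγ'AZ : γ' (𝒜ᶜ ×ˢ 𝒵) = 0 := by
    have hsub : 𝒜ᶜ ×ˢ 𝒵 ⊆ ⋃ k, ((A k)ᶜ) ×ˢ (Z k) := by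
      rintro ⟨x, y⟩ ⟨hx, hy⟩
      obtain ⟨k, hk⟩ := mem_iUnion.1 hy
      exact mem_iUnion.2 ⟨k, ⟨fun hmem => hx (mem_iUnion.2 ⟨k, hmem⟩), hk⟩⟩
    refine measure_mono_null hsub (measure_iUnion_null fun k => ?_)
    have heq : γ' (((A k)ᶜ) ×ˢ (Z k)) = (alphaM γ' (Z k)) ((A k)ᶜ) :=
      (map_fst_restrict γ' (Z k) (hAm k).compl).symm
    rw [heq]
    haveI : IsFiniteMeasure (γ.map Prod.fst) := Measure.isFiniteMeasure_map γ Prod.fst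
    haveI : IsFiniteMeasure (alphaM γ' (Z k)) :=
      finite_of_le _ (γ.map Prod.fst) (alphaM_le γ γ' hfst (Z k))
    exact null_off_carrier (alphaM γ' (Z k)) (γ.map Prod.fst)
      ((alphaM_le γ γ' hfst (Z k)).absolutelyContinuous)
  -- mass computations
  have hsplit1 : γ (𝒜 ×ˢ (univ : Set Y)) = γ (𝒜 ×ˢ 𝒵) + γ (𝒜 ×ˢ 𝒵ᶜ) := by
    have := measure_inter_add_diff (μ := γ) (𝒜 ×ˢ (univ : Set Y))
      (measurable_snd h𝒵m)
    rw [show 𝒜 ×ˢ (univ : Set Y) ∩ Prod.snd ⁻¹' 𝒵 = 𝒜 ×ˢ 𝒵 by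
        ext ⟨x, y⟩; simp [Set.mem_prod],
      show 𝒜 ×ˢ (univ : Set Y) \ Prod.snd ⁻¹' 𝒵 = 𝒜 ×ˢ 𝒵ᶜ by
        ext ⟨x, y⟩; simp [Set.mem_prod]] at this
    exact this.symm
  have hsplit2 : γ ((univ : Set X) ×ˢ 𝒵) = γ (𝒜 ×ˢ 𝒵) + γ (𝒜ᶜ ×ˢ 𝒵) := by
    have := measure_inter_add_diff (μ := γ) ((univ : Set X) ×ˢ 𝒵)
      (measurable_fst h𝒜m)
    rw [show (univ : Set X) ×ˢ 𝒵 ∩ Prod.fst ⁻¹' 𝒜 = 𝒜 ×ˢ 𝒵 by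
        ext ⟨x, y⟩; simp [Set.mem_prod, and_comm],
      show (univ : Set X) ×ˢ 𝒵 \ Prod.fst ⁻¹' 𝒜 = 𝒜ᶜ ×ˢ 𝒵 by
        ext ⟨x, y⟩; simp [Set.mem_prod, and_comm]] at this
    exact this.symm
  have hsplit3 : γ' ((univ : Set X) ×ˢ 𝒵) = γ' (𝒜 ×ˢ 𝒵) + γ' (𝒜ᶜ ×ˢ 𝒵) := by
    have := measure_inter_add_diff (μ := γ') ((univ : Set X) ×ˢ 𝒵)
      (measurable_fst h𝒜m)
    rw [show (univ : Set X) ×ˢ 𝒵 ∩ Prod.fst ⁻¹' 𝒜 = 𝒜 ×ˢ 𝒵 by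
        ext ⟨x, y⟩; simp [Set.mem_prod, and_comm],
      show (univ : Set X) ×ˢ 𝒵 \ Prod.fst ⁻¹' 𝒜 = 𝒜ᶜ ×ˢ 𝒵 by
        ext ⟨x, y⟩; simp [Set.mem_prod, and_comm]] at this
    exact this.symm
  set M : ℝ≥0∞ := γ (𝒜 ×ˢ 𝒵) with hM
  -- γ(𝒜 × 𝒵) = γ(𝒜 × univ)
  have hAZfull : γ (𝒜 ×ˢ (univ : Set Y)) = M := by
    rw [hsplit1, hγAZ, add_zero]
  -- the γ' side
  have hγ'eq : γ' ((univ : Set X) ×ˢ 𝒵) = γ' (𝒜 ×ˢ 𝒵) := by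
    rw [hsplit3, hγ'AZ, add_zero]
  have hγ'le : γ' ((univ : Set X) ×ˢ 𝒵) ≤ M := by
    rw [hγ'eq, ← hAZfull]
    have h1 : γ' (𝒜 ×ˢ 𝒵) ≤ γ' (𝒜 ×ˢ (univ : Set Y)) :=
      measure_mono (prod_mono_right (subset_univ _))
    have h2 : γ' (𝒜 ×ˢ (univ : Set Y)) = γ (𝒜 ×ˢ (univ : Set Y)) := by
      have e1 : γ' (𝒜 ×ˢ (univ : Set Y)) = (γ'.map Prod.fst) 𝒜 := by
        rw [Measure.map_apply measurable_fst h𝒜m]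
        congr 1
        ext ⟨x, y⟩; simp
      have e2 : γ (𝒜 ×ˢ (univ : Set Y)) = (γ.map Prod.fst) 𝒜 := by
        rw [Measure.map_apply measurable_fst h𝒜m]
        congr 1
        ext ⟨x, y⟩; simp
      rw [e1, e2, hfst]
    exact h2 ▸ h1
  -- equality of the two sides on univ × 𝒵
  have hγγ' : γ ((univ : Set X) ×ˢ 𝒵) = γ' ((univ : Set X) ×ˢ 𝒵) := by
    have e1 : γ ((univ : Set X) ×ˢ 𝒵) = (γ.map Prod.snd) 𝒵 := by
      rw [Measure.map_apply measurable_snd h𝒵m]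
      congr 1
      ext ⟨x, y⟩; simp
    have e2 : γ' ((univ : Set X) ×ˢ 𝒵) = (γ'.map Prod.snd) 𝒵 := by
      rw [Measure.map_apply measurable_snd h𝒵m]
      congr 1
      ext ⟨x, y⟩; simp
    rw [e1, e2, hsnd]
  -- γ₀ has all its mass on 𝒜ᶜ × 𝒵
  have hγ₀mass : γ₀ univ ≤ γ₀ (𝒜ᶜ ×ˢ 𝒵) := by
    have hcover : (univ : Set (X × Y)) ⊆
        (𝒜ᶜ ×ˢ 𝒵) ∪ ((𝒜 ×ˢ (univ : Set Y)) ∪ ((univ : Set X) ×ˢ 𝒵ᶜ)) := by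
      rintro ⟨x, y⟩ -
      by_cases hx : x ∈ 𝒜
      · exact Or.inr (Or.inl ⟨hx, mem_univ _⟩)
      · by_cases hy : y ∈ 𝒵
        · exact Or.inl ⟨hx, hy⟩
        · exact Or.inr (Or.inr ⟨mem_univ _, hy⟩)
    calc γ₀ univ ≤ γ₀ ((𝒜ᶜ ×ˢ 𝒵) ∪ ((𝒜 ×ˢ (univ : Set Y)) ∪ ((univ : Set X) ×ˢ 𝒵ᶜ))) :=
          measure_mono hcover
      _ ≤ γ₀ (𝒜ᶜ ×ˢ 𝒵) + γ₀ ((𝒜 ×ˢ (univ : Set Y)) ∪ ((univ : Set X) ×ˢ 𝒵ᶜ)) :=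
          measure_union_le _ _
      _ ≤ γ₀ (𝒜ᶜ ×ˢ 𝒵) + (γ₀ (𝒜 ×ˢ (univ : Set Y)) + γ₀ ((univ : Set X) ×ˢ 𝒵ᶜ)) :=
          add_le_add_right (measure_union_le _ _) _
      _ = γ₀ (𝒜ᶜ ×ˢ 𝒵) := by rw [hγ₀A, hγ₀Z, add_zero, add_zero]
  -- final contradiction
  have hfinal : M + γ₀ univ ≤ M + 0 := by
    calc M + γ₀ univ ≤ γ (𝒜 ×ˢ 𝒵) + γ (𝒜ᶜ ×ˢ 𝒵) := by
          refine add_le_add_right ?_ _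
          exact hγ₀mass.trans (meas_le_iff.1 h0 _)
      _ = γ ((univ : Set X) ×ˢ 𝒵) := hsplit2.symm
      _ = γ' ((univ : Set X) ×ˢ 𝒵) := hγγ'
      _ ≤ M := hγ'le
      _ = M + 0 := (add_zero M).symm
  have hMne : M ≠ ∞ := measure_ne_top γ _
  have : γ₀ univ ≤ 0 := (ENNReal.add_le_add_iff_left hMne).1 hfinal
  exact (Measure.measure_univ_ne_zero.2 hne) (le_antisymm this (zero_le))

end Termination


section ChainD

variable (γ γ' γ₀ : Measure (X × Y)) [IsFiniteMeasure γ] [IsFiniteMeasure γ']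
  [IsFiniteMeasure γ₀]

theorem chainD (h0 : γ₀ ≤ γ) (hfst : γ'.map Prod.fst = γ.map Prod.fst)
    (hsnd : γ'.map Prod.snd = γ.map Prod.snd) :
    ∀ (k : ℕ) (m : Measure X), m ≠ 0 →
      (∃ c : ℝ≥0∞, c ≠ 0 ∧ c ≠ ∞ ∧ m ≤ c • alphaM γ' (Zseq γ γ' γ₀ k)) →
      ∃ (n : ℕ) (ζs ηs : ℕ → Measure (X × Y)) (c : ℝ≥0∞), n ≤ k ∧ c ≠ 0 ∧ c ≠ ∞ ∧
        (∀ j, j ≤ n → ζs j ≤ c • γ') ∧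
        (∀ j, 1 ≤ j → j ≤ n → ηs j ≤ c • (γ - γ₀)) ∧
        (ζs 0).map Prod.snd ≤ γ₀.map Prod.snd ∧
        (∀ j, 1 ≤ j → j ≤ n → (ζs j).map Prod.snd = (ηs j).map Prod.snd) ∧
        (∀ j, 1 ≤ j → j ≤ n → (ηs j).map Prod.fst = (ζs (j - 1)).map Prod.fst) ∧
        (∀ j, 1 ≤ j → j ≤ n → ((ηs j).map Prod.snd) (Zseq γ γ' γ₀ 0) = 0) ∧
        (ζs n).map Prod.fst ≠ 0 ∧ (ζs n).map Prod.fst ≤ m := by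
  intro k
  induction k using Nat.strong_induction_on with
  | _ k IH =>
  intro m hm hcex
  obtain ⟨c, hc0, hcT, hmc⟩ := hcex
  haveI : IsFiniteMeasure (γ.map Prod.fst) := Measure.isFiniteMeasure_map γ Prod.fst
  haveI : IsFiniteMeasure (γ.map Prod.snd) := Measure.isFiniteMeasure_map γ Prod.snd
  haveI : IsFiniteMeasure (γ - γ₀) := finite_of_le _ _ Measure.sub_le
  haveI : IsFiniteMeasure (γ₀.map Prod.snd) := Measure.isFiniteMeasure_map γ₀ Prod.snd
  have hZkm : MeasurableSet (Zseq γ γ' γ₀ k) := Zseq_meas γ γ' γ₀ k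
  have hZ0m : MeasurableSet (Zseq γ γ' γ₀ 0) := Zseq_meas γ γ' γ₀ 0
  haveI : IsFiniteMeasure (alphaM γ' (Zseq γ γ' γ₀ k)) :=
    finite_of_le _ (γ.map Prod.fst) (alphaM_le γ γ' hfst _)
  haveI : IsFiniteMeasure m := finite_of_le_smul hcT hmc
  have hmac : m ≪ alphaM γ' (Zseq γ γ' γ₀ k) :=
    hmc.absolutelyContinuous.trans
      (Measure.AbsolutelyContinuous.mk fun s hs h => by simp [Measure.smul_apply, h])
  -- realize the top edge
  set cap : Measure (X × Y) := γ'.restrict (univ ×ˢ Zseq γ γ' γ₀ k) with hcap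
  have hcapfst : cap.map Prod.fst = alphaM γ' (Zseq γ γ' γ₀ k) := rfl
  haveI : IsFiniteMeasure cap := finite_of_le _ γ' Measure.restrict_le_self
  set ζ : Measure (X × Y) := sub1 cap m with hζ
  have hζfst : ζ.map Prod.fst = m := sub1_map_fst cap m (by rw [hcapfst]; exact hmac)
  have hζlecap : ζ ≤ c • cap := sub1_le cap m hc0 hcT (by rw [hcapfst]; exact hmc)
  have hζle : ζ ≤ c • γ' := hζlecap.trans (smul_mono_meas Measure.restrict_le_self)
  haveI : IsFiniteMeasure ζ := finite_of_le_smul hcT hζle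
  set q : Measure Y := ζ.map Prod.snd with hq
  haveI : IsFiniteMeasure q := Measure.isFiniteMeasure_map ζ Prod.snd
  have hqle : q ≤ c • (cap.map Prod.snd) := by
    rw [hq, ← Measure.map_smul]
    exact Measure.map_mono hζlecap measurable_snd
  have hqν : q ≤ c • γ.map Prod.snd := by
    refine hqle.trans (smul_mono_meas ?_)
    rw [← hsnd]
    exact Measure.map_mono Measure.restrict_le_self measurable_snd
  have hqac : q ≪ γ.map Prod.snd :=
    hqν.absolutelyContinuous.trans
      (Measure.AbsolutelyContinuous.mk fun s hs h => by simp [Measure.smul_apply, h])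
  have hq0 : q ≠ 0 := by
    rw [← Measure.measure_univ_ne_zero, hq, map_univ ζ measurable_snd,
      ← map_univ ζ measurable_fst, hζfst]
    exact Measure.measure_univ_ne_zero.2 hm
  by_cases hqZ0 : q (Zseq γ γ' γ₀ 0) ≠ 0
  · -- case (a) : some mass lands in the carrier of ν₀; finish with a chain of length 0
    have hν₀ac : γ₀.map Prod.snd ≪ γ.map Prod.snd :=
      (Measure.map_mono h0 measurable_snd).absolutelyContinuous
    have hposset := pos_inter (γ.map Prod.snd) q hqac hZ0m hqZ0
    have hpos' : (γ.map Prod.snd) ({y | 0 < q.rnDeriv (γ.map Prod.snd) y} ∩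
        {y | 0 < (γ₀.map Prod.snd).rnDeriv (γ.map Prod.snd) y}) ≠ 0 := by
      rw [inter_comm]
      exact hposset
    obtain ⟨ω, hω0, hωq, hων₀⟩ :=
      exists_min (γ.map Prod.snd) q (γ₀.map Prod.snd) hqac hν₀ac hpos'
    haveI : IsFiniteMeasure ω := finite_of_le _ _ hωq
    have hωac : ω ≪ ζ.map Prod.snd := by rw [← hq]; exact hωq.absolutelyContinuous
    set ζ' : Measure (X × Y) := sub2 ζ ω with hζ'
    have hζ'snd : ζ'.map Prod.snd = ω := sub2_map_snd ζ ω hωac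
    have hζ'le : ζ' ≤ ζ := by
      have := sub2_le ζ ω one_ne_zero ENNReal.one_ne_top
        (by rw [one_smul, ← hq]; exact hωq)
      rwa [one_smul] at this
    refine ⟨0, fun _ => ζ', fun _ => 0, c, Nat.zero_le k, hc0, hcT, ?_, ?_, ?_, ?_, ?_, ?_, ?_, ?_⟩
    · exact fun j _ => hζ'le.trans hζle
    · intro j h1 h2; omega
    · show ζ'.map Prod.snd ≤ γ₀.map Prod.snd
      rw [hζ'snd]; exact hων₀
    · intro j h1 h2; omega
    · intro j h1 h2; omega
    · intro j h1 h2; omega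
    · show ζ'.map Prod.fst ≠ 0
      rw [← Measure.measure_univ_ne_zero, map_univ ζ' measurable_fst,
        ← map_univ ζ' measurable_snd, hζ'snd]
      exact Measure.measure_univ_ne_zero.2 hω0
    · show ζ'.map Prod.fst ≤ m
      rw [← hζfst]
      exact Measure.map_mono hζ'le measurable_fst
  · -- case (b) : all mass lands on the reachable annuli; recurse
    push_neg at hqZ0
    have hqZk : q ((Zseq γ γ' γ₀ k)ᶜ) = 0 := by
      have h1 : (cap.map Prod.snd) ((Zseq γ γ' γ₀ k)ᶜ) = 0 := by
        rw [hcap, map_snd_restrict2 γ' _ hZkm.compl, compl_inter_self, prod_empty,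
          measure_empty]
      have h2 := meas_le_iff.1 hqle ((Zseq γ γ' γ₀ k)ᶜ)
      rw [Measure.smul_apply, h1, smul_eq_mul, mul_zero] at h2
      exact le_antisymm h2 (zero_le)
    have hex : ∃ j, j < k ∧
        q (Bset γ γ₀ (Aset γ γ' (Zseq γ γ' γ₀ j)) \ Zseq γ γ' γ₀ 0) ≠ 0 := by
      by_contra hno
      push_neg at hno
      have hZknull : q (Zseq γ γ' γ₀ k) = 0 := by
        refine measure_mono_null (Zseq_cover γ γ' γ₀ k) ?_
        refine measure_union_null hqZ0 (measure_iUnion_null fun j => ?_)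
        by_cases hjk : j < k
        · have : q (Bset γ γ₀ (Aset γ γ' (Zseq γ γ' γ₀ j))) ≤
              q (Bset γ γ₀ (Aset γ γ' (Zseq γ γ' γ₀ j)) \ Zseq γ γ' γ₀ 0) +
              q (Zseq γ γ' γ₀ 0) := by
            refine le_trans (measure_mono ?_) (measure_union_le _ _)
            intro y hy
            by_cases hy0 : y ∈ Zseq γ γ' γ₀ 0
            · exact Or.inr hy0
            · exact Or.inl ⟨hy, hy0⟩
          rw [hno j hjk, hqZ0, add_zero] at this
          have hz : q (Bset γ γ₀ (Aset γ γ' (Zseq γ γ' γ₀ j))) = 0 :=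
            le_antisymm this (zero_le)
          refine measure_mono_null ?_ hz
          exact iUnion_subset fun _ => subset_rfl
        · refine measure_mono_null ?_ (measure_empty (μ := q))
          refine iUnion_subset fun h => absurd h hjk
      have : q univ ≤ q (Zseq γ γ' γ₀ k) + q ((Zseq γ γ' γ₀ k)ᶜ) := by
        refine le_trans (measure_mono (fun y _ => ?_)) (measure_union_le _ _)
        by_cases hy : y ∈ Zseq γ γ' γ₀ k
        · exact Or.inl hy
        · exact Or.inr hy
      rw [hZknull, hqZk, add_zero] at this
      exact (Measure.measure_univ_ne_zero.2 hq0) (le_antisymm this (zero_le))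
    obtain ⟨j, hjk, hqj⟩ := hex
    have hAjm : MeasurableSet (Aset γ γ' (Zseq γ γ' γ₀ j)) := Aset_meas γ γ' _
    have hBjm : MeasurableSet (Bset γ γ₀ (Aset γ γ' (Zseq γ γ' γ₀ j))) := Bset_meas γ γ₀ _
    set W : Set Y := Bset γ γ₀ (Aset γ γ' (Zseq γ γ' γ₀ j)) \ Zseq γ γ' γ₀ 0 with hWdef
    have hWm : MeasurableSet W := hBjm.diff hZ0m
    set qj : Measure Y := q.restrict W with hqj'
    have hqjne : qj ≠ 0 := by
      rw [← Measure.measure_univ_ne_zero, Measure.restrict_apply MeasurableSet.univ,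
        univ_inter]
      exact hqj
    haveI : IsFiniteMeasure qj := finite_of_le _ q Measure.restrict_le_self
    haveI : IsFiniteMeasure (betaM γ γ₀ (Aset γ γ' (Zseq γ γ' γ₀ j))) :=
      finite_of_le _ (γ.map Prod.snd) (betaM_le γ γ₀ h0 _)
    have hβac : betaM γ γ₀ (Aset γ γ' (Zseq γ γ' γ₀ j)) ≪ γ.map Prod.snd :=
      (betaM_le γ γ₀ h0 _).absolutelyContinuous
    have hqjν : qj ≪ γ.map Prod.snd := Measure.restrict_le_self.absolutelyContinuous.trans hqac
    have hqjconc : qj ({y | 0 <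
        (betaM γ γ₀ (Aset γ γ' (Zseq γ γ' γ₀ j))).rnDeriv (γ.map Prod.snd) y}ᶜ) = 0 := by
      rw [hqj', Measure.restrict_apply' hWm, hWdef]
      refine measure_mono_null (fun y hy => (hy.1 hy.2.1 : y ∈ (∅ : Set Y))) ?_
      exact measure_empty (μ := q)
    have hqjac : qj ≪ betaM γ γ₀ (Aset γ γ' (Zseq γ γ' γ₀ j)) :=
      ac_of_concentrated (γ.map Prod.snd) _ qj hβac hqjν hqjconc
    obtain ⟨q', hq'ne, hq'le, n₂, hn₂0, hq'β⟩ :=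
      trim_lemma qj (betaM γ γ₀ (Aset γ γ' (Zseq γ γ' γ₀ j))) hqjne hqjac
    haveI : IsFiniteMeasure q' := finite_of_le _ qj hq'le
    set capj : Measure (X × Y) := (γ - γ₀).restrict ((Aset γ γ' (Zseq γ γ' γ₀ j)) ×ˢ univ)
      with hcapj
    have hcapjsnd : capj.map Prod.snd = betaM γ γ₀ (Aset γ γ' (Zseq γ γ' γ₀ j)) := rfl
    haveI : IsFiniteMeasure capj := finite_of_le _ (γ - γ₀) Measure.restrict_le_self
    have hq'ac : q' ≪ capj.map Prod.snd := by
      rw [hcapjsnd]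
      exact hq'le.absolutelyContinuous.trans hqjac
    set η : Measure (X × Y) := sub2 capj q' with hη
    have hηsnd : η.map Prod.snd = q' := sub2_map_snd capj q' hq'ac
    have hCT : ((n₂ : ℝ≥0∞)) ≠ ∞ := ENNReal.natCast_ne_top n₂
    have hC0 : ((n₂ : ℝ≥0∞)) ≠ 0 := Nat.cast_ne_zero.2 hn₂0
    have hηlecapj : η ≤ (n₂ : ℝ≥0∞) • capj :=
      sub2_le capj q' hC0 hCT (by rw [hcapjsnd]; exact hq'β)
    have hηle : η ≤ (n₂ : ℝ≥0∞) • (γ - γ₀) :=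
      hηlecapj.trans (smul_mono_meas Measure.restrict_le_self)
    haveI : IsFiniteMeasure η := finite_of_le_smul hCT hηle
    set m₁ : Measure X := η.map Prod.fst with hm₁
    haveI : IsFiniteMeasure m₁ := Measure.isFiniteMeasure_map η Prod.fst
    have hm₁ne : m₁ ≠ 0 := by
      rw [← Measure.measure_univ_ne_zero, hm₁, map_univ η measurable_fst,
        ← map_univ η measurable_snd, hηsnd]
      exact Measure.measure_univ_ne_zero.2 hq'ne
    have hm₁lecapj : m₁ ≤ (n₂ : ℝ≥0∞) • capj.map Prod.fst := by
      rw [hm₁, ← Measure.map_smul]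
      exact Measure.map_mono hηlecapj measurable_fst
    haveI : IsFiniteMeasure (alphaM γ' (Zseq γ γ' γ₀ j)) :=
      finite_of_le _ (γ.map Prod.fst) (alphaM_le γ γ' hfst _)
    have hαjac : alphaM γ' (Zseq γ γ' γ₀ j) ≪ γ.map Prod.fst :=
      (alphaM_le γ γ' hfst _).absolutelyContinuous
    have hm₁conc : m₁ ({x | 0 <
        (alphaM γ' (Zseq γ γ' γ₀ j)).rnDeriv (γ.map Prod.fst) x}ᶜ) = 0 := by
      have h1 : (capj.map Prod.fst) ((Aset γ γ' (Zseq γ γ' γ₀ j))ᶜ) = 0 := by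
        rw [hcapj, map_fst_restrict2 (γ - γ₀) _ hAjm.compl, compl_inter_self,
          empty_prod, measure_empty]
      have h2 := meas_le_iff.1 hm₁lecapj ((Aset γ γ' (Zseq γ γ' γ₀ j))ᶜ)
      rw [Measure.smul_apply, h1, smul_eq_mul, mul_zero] at h2
      exact le_antisymm h2 (zero_le)
    have hm₁ac : m₁ ≪ γ.map Prod.fst := by
      have hle : m₁ ≤ (n₂ : ℝ≥0∞) • γ.map Prod.fst := by
        refine hm₁lecapj.trans (smul_mono_meas ?_)
        refine (Measure.map_mono Measure.restrict_le_self measurable_fst).trans ?_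
        exact Measure.map_mono Measure.sub_le measurable_fst
      exact hle.absolutelyContinuous.trans
        (Measure.AbsolutelyContinuous.mk fun s hs h => by simp [Measure.smul_apply, h])
    have hm₁αj : m₁ ≪ alphaM γ' (Zseq γ γ' γ₀ j) :=
      ac_of_concentrated (γ.map Prod.fst) _ m₁ hαjac hm₁ac hm₁conc
    obtain ⟨m₁', hm₁'ne, hm₁'le, n₃, hn₃0, hm₁'α⟩ :=
      trim_lemma m₁ (alphaM γ' (Zseq γ γ' γ₀ j)) hm₁ne hm₁αj
    obtain ⟨n', ζs', ηs', c', hn'j, hc'0, hc'T, hζ'b, hη'b, hζ'0, hmsnd, hmfst, hZ0n,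
      htopne, htople⟩ :=
      IH j hjk m₁' hm₁'ne ⟨(n₃ : ℝ≥0∞), Nat.cast_ne_zero.2 hn₃0,
        ENNReal.natCast_ne_top n₃, hm₁'α⟩
    have hmtle : (ζs' n').map Prod.fst ≤ m₁ := htople.trans hm₁'le
    haveI : IsFiniteMeasure ((ζs' n').map Prod.fst) := finite_of_le _ m₁ hmtle
    have hmtac : (ζs' n').map Prod.fst ≪ η.map Prod.fst := by
      rw [← hm₁]; exact hmtle.absolutelyContinuous
    set η' : Measure (X × Y) := sub1 η ((ζs' n').map Prod.fst) with hη'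
    have hη'fst : η'.map Prod.fst = (ζs' n').map Prod.fst :=
      sub1_map_fst η _ hmtac
    have hη'leη : η' ≤ η := by
      have := sub1_le η ((ζs' n').map Prod.fst) one_ne_zero ENNReal.one_ne_top
        (by rw [one_smul, ← hm₁]; exact hmtle)
      rwa [one_smul] at this
    haveI : IsFiniteMeasure η' := finite_of_le _ η hη'leη
    set q'' : Measure Y := η'.map Prod.snd with hq''
    haveI : IsFiniteMeasure q'' := Measure.isFiniteMeasure_map η' Prod.snd
    have hq''leq' : q'' ≤ q' := by
      rw [hq'', ← hηsnd]
      exact Measure.map_mono hη'leη measurable_snd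
    have hq''leq : q'' ≤ q := hq''leq'.trans (hq'le.trans Measure.restrict_le_self)
    have hq''ac : q'' ≪ ζ.map Prod.snd := by
      rw [← hq]; exact hq''leq.absolutelyContinuous
    set ζ'' : Measure (X × Y) := sub2 ζ q'' with hζ''
    have hζ''snd : ζ''.map Prod.snd = q'' := sub2_map_snd ζ q'' hq''ac
    have hζ''le : ζ'' ≤ ζ := by
      have := sub2_le ζ q'' one_ne_zero ENNReal.one_ne_top
        (by rw [one_smul, ← hq]; exact hq''leq)
      rwa [one_smul] at this
    have hζ''fstle : ζ''.map Prod.fst ≤ m := by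
      rw [← hζfst]; exact Measure.map_mono hζ''le measurable_fst
    have hζ''fstne : ζ''.map Prod.fst ≠ 0 := by
      rw [← Measure.measure_univ_ne_zero, map_univ ζ'' measurable_fst,
        ← map_univ ζ'' measurable_snd, hζ''snd, hq'', map_univ η' measurable_snd,
        ← map_univ η' measurable_fst, hη'fst]
      exact Measure.measure_univ_ne_zero.2 htopne
    -- the combined constant
    set cmax : ℝ≥0∞ := max (max c' c) (n₂ : ℝ≥0∞) with hcmax
    have hcmaxT : cmax ≠ ∞ :=
      (max_lt (max_lt hc'T.lt_top hcT.lt_top) hCT.lt_top).ne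
    have hc'le : c' ≤ cmax := (le_max_left c' c).trans (le_max_left _ _)
    have hcle : c ≤ cmax := (le_max_right c' c).trans (le_max_left _ _)
    have hCle : (n₂ : ℝ≥0∞) ≤ cmax := le_max_right _ _
    have hcmax0 : cmax ≠ 0 := (lt_of_lt_of_le (pos_iff_ne_zero.2 hc0) hcle).ne'
    refine ⟨n' + 1, fun i => if i ≤ n' then ζs' i else ζ'',
      fun i => if i ≤ n' then ηs' i else η', cmax, by omega, hcmax0, hcmaxT,
      ?_, ?_, ?_, ?_, ?_, ?_, ?_, ?_⟩
    · intro i hi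
      by_cases hin : i ≤ n'
      · simp only [if_pos hin]
        exact (hζ'b i hin).trans (smul_mono_scalar hc'le)
      · simp only [if_neg hin]
        exact hζ''le.trans (hζle.trans (smul_mono_scalar hcle))
    · intro i h1 h2
      by_cases hin : i ≤ n'
      · simp only [if_pos hin]
        exact (hη'b i h1 hin).trans (smul_mono_scalar hc'le)
      · simp only [if_neg hin]
        exact hη'leη.trans (hηle.trans (smul_mono_scalar hCle))
    · simp only [if_pos (Nat.zero_le n')]
      exact hζ'0
    · intro i h1 h2
      by_cases hin : i ≤ n'
      · simp only [if_pos hin]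
        exact hmsnd i h1 hin
      · simp only [if_neg hin]
        rw [hζ''snd, hq'']
    · intro i h1 h2
      by_cases hin : i ≤ n'
      · have hin' : i - 1 ≤ n' := by omega
        simp only [if_pos hin, if_pos hin']
        exact hmfst i h1 hin
      · have hi1 : i - 1 = n' := by omega
        simp only [if_neg hin, hi1, if_pos (le_refl n')]
        exact hη'fst
    · intro i h1 h2
      by_cases hin : i ≤ n'
      · simp only [if_pos hin]
        exact hZ0n i h1 hin
      · simp only [if_neg hin]
        have hqjZ0 : qj (Zseq γ γ' γ₀ 0) = 0 := by
          rw [hqj', Measure.restrict_apply hZ0m, hWdef]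
          refine measure_mono_null (fun y hy => (hy.2.2 hy.1 : y ∈ (∅ : Set Y)))
            (measure_empty (μ := q))
        have hle : q'' (Zseq γ γ' γ₀ 0) ≤ qj (Zseq γ γ' γ₀ 0) :=
          meas_le_iff.1 (hq''leq'.trans hq'le) _
        rw [← hq'']
        exact le_antisymm (hqjZ0 ▸ hle) (zero_le)
    · simp only [if_neg (Nat.not_succ_le_self n')]
      exact hζ''fstne
    · simp only [if_neg (Nat.not_succ_le_self n')]
      exact hζ''fstle

end ChainD


section Assembly

variable (γ γ' γ₀ : Measure (X × Y)) [IsFiniteMeasure γ] [IsFiniteMeasure γ']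
  [IsFiniteMeasure γ₀]

theorem chain_core (h0 : γ₀ ≤ γ) (hne : γ₀ ≠ 0)
    (hfst : γ'.map Prod.fst = γ.map Prod.fst)
    (hsnd : γ'.map Prod.snd = γ.map Prod.snd) :
    ∃ (N : ℕ) (εbar : ℝ≥0∞), 0 < εbar ∧
      ∀ ε : ℝ≥0∞, 0 < ε → ε ≤ εbar →
        ∃ (γt γt' γt0 γtinf : Measure (X × Y)) (μt : Measure X) (νt : Measure Y)
          (μA : Measure X) (νA νB : Measure Y),
          γt ≤ γ ∧ γt' ≤ γ' ∧
          γt.map Prod.fst = μt + μA ∧ γt'.map Prod.fst = μt + μA ∧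
          γt.map Prod.snd = νt + νA ∧ γt'.map Prod.snd = νt + νB ∧
          μA ≤ γ₀.map Prod.fst ∧ μt ≤ γ.map Prod.fst - γ₀.map Prod.fst ∧
          νA ≤ γ₀.map Prod.snd ∧ νB ≤ γ₀.map Prod.snd ∧
          νt.MutuallySingular (γ₀.map Prod.snd) ∧
          γt univ = ((N : ℝ≥0∞) + 1) * ε ∧ γt' univ = ((N : ℝ≥0∞) + 1) * ε ∧
          μt univ = (N : ℝ≥0∞) * ε ∧ νt univ = (N : ℝ≥0∞) * ε ∧
          μA univ = ε ∧ νA univ = ε ∧ νB univ = ε ∧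
          γt = γt0 + γtinf ∧ γt0 ≤ γ₀ ∧ γtinf ≤ γ - γ₀ ∧
          γt0.map Prod.fst = μA ∧ γt0.map Prod.snd = νA ∧
          γtinf.map Prod.fst = μt ∧ γtinf.map Prod.snd = νt := by
  haveI : IsFiniteMeasure (γ.map Prod.fst) := Measure.isFiniteMeasure_map γ Prod.fst
  haveI : IsFiniteMeasure (γ.map Prod.snd) := Measure.isFiniteMeasure_map γ Prod.snd
  haveI : IsFiniteMeasure (γ₀.map Prod.fst) := Measure.isFiniteMeasure_map γ₀ Prod.fst
  haveI : IsFiniteMeasure (γ₀.map Prod.snd) := Measure.isFiniteMeasure_map γ₀ Prod.snd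
  haveI : IsFiniteMeasure (γ - γ₀) := finite_of_le _ _ Measure.sub_le
  have hZ0m : MeasurableSet (Zseq γ γ' γ₀ 0) := Zseq_meas γ γ' γ₀ 0
  obtain ⟨K, hK⟩ := exists_overlap γ γ' γ₀ h0 hne hfst hsnd
  have hμ₀ac : γ₀.map Prod.fst ≪ γ.map Prod.fst :=
    (Measure.map_mono h0 measurable_fst).absolutelyContinuous
  haveI : IsFiniteMeasure (alphaM γ' (Zseq γ γ' γ₀ K)) :=
    finite_of_le _ (γ.map Prod.fst) (alphaM_le γ γ' hfst _)
  have hαac : alphaM γ' (Zseq γ γ' γ₀ K) ≪ γ.map Prod.fst :=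
    (alphaM_le γ γ' hfst _).absolutelyContinuous
  have hposet := pos_inter (γ.map Prod.fst) (γ₀.map Prod.fst) hμ₀ac
    (Aset_meas γ γ' (Zseq γ γ' γ₀ K)) hK
  obtain ⟨m, hm0, hmμ₀, hmα⟩ := exists_min (γ.map Prod.fst) (γ₀.map Prod.fst)
    (alphaM γ' (Zseq γ γ' γ₀ K)) hμ₀ac hαac (by rw [inter_comm]; exact hposet)
  haveI : IsFiniteMeasure m := finite_of_le _ _ hmμ₀
  obtain ⟨n, ζs, ηs, c, hnK, hc0, hcT, hζb, hηb, hζ0, hmsnd, hmfst, hZ0n, htopne, htople⟩ :=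
    chainD γ γ' γ₀ h0 hfst hsnd K m hm0
      ⟨1, one_ne_zero, ENNReal.one_ne_top, by rw [one_smul]; exact hmα⟩
  set m' : Measure X := (ζs n).map Prod.fst with hm'
  set M : ℝ≥0∞ := m' univ with hM
  have hM0 : M ≠ 0 := Measure.measure_univ_ne_zero.2 htopne
  have hm'le : m' ≤ γ₀.map Prod.fst := htople.trans hmμ₀
  haveI : IsFiniteMeasure m' := finite_of_le _ _ hm'le
  have hMT : M ≠ ∞ := measure_ne_top m' univ
  -- all the chain pieces have the same mass M
  have hstep : ∀ i, 1 ≤ i → i ≤ n → (ζs (i-1)) univ = (ζs i) univ := by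
    intro i h1 h2
    have e1 : (ζs i) univ = (ηs i) univ := by
      rw [← map_univ (ζs i) measurable_snd, hmsnd i h1 h2, map_univ (ηs i) measurable_snd]
    have e2 : (ηs i) univ = (ζs (i-1)) univ := by
      rw [← map_univ (ηs i) measurable_fst, hmfst i h1 h2,
        map_univ (ζs (i-1)) measurable_fst]
    rw [e1, e2]
  have hmass : ∀ i, i ≤ n → (ζs i) univ = M := by
    have haux : ∀ d i, i + d = n → (ζs i) univ = M := by
      intro d
      induction d with
      | zero =>
          intro i h
          have : i = n := by omega
          subst this
          rw [hM, hm', map_univ (ζs i) measurable_fst]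
      | succ d hd =>
          intro i h
          have h1 : (ζs i) univ = (ζs (i+1)) univ := by
            have := hstep (i+1) (by omega) (by omega)
            simpa using this
          rw [h1]
          exact hd (i+1) (by omega)
    intro i hi
    exact haux (n - i) i (by omega)
  have hmassη : ∀ i, 1 ≤ i → i ≤ n → (ηs i) univ = M := by
    intro i h1 h2
    rw [← map_univ (ηs i) measurable_fst, hmfst i h1 h2,
      map_univ (ζs (i-1)) measurable_fst]
    exact hmass (i-1) (by omega)
  -- scaling constants
  set cm : ℝ≥0∞ := max c 1 with hcm
  have hcm0 : cm ≠ 0 := (lt_of_lt_of_le zero_lt_one (le_max_right c 1)).ne'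
  have hcmT : cm ≠ ∞ := (max_lt hcT.lt_top ENNReal.one_lt_top).ne
  set D : ℝ≥0∞ := ((2*n+2 : ℕ) : ℝ≥0∞) * cm with hD
  have hD0 : D ≠ 0 := mul_ne_zero (Nat.cast_ne_zero.2 (by omega)) hcm0
  have hDT : D ≠ ∞ := ENNReal.mul_ne_top (ENNReal.natCast_ne_top _) hcmT
  have hD1 : (1 : ℝ≥0∞) ≤ D := by
    calc (1 : ℝ≥0∞) = 1 * 1 := (one_mul 1).symm
      _ ≤ ((2*n+2 : ℕ) : ℝ≥0∞) * cm := by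
          refine mul_le_mul' ?_ (le_max_right c 1)
          exact_mod_cast Nat.one_le_iff_ne_zero.2 (by omega)
  refine ⟨n, M / D, ENNReal.div_pos hM0 hDT, ?_⟩
  intro ε hε0 hεle
  set t : ℝ≥0∞ := ε / M with ht
  have htM : t * M = ε := ENNReal.div_mul_cancel hM0 hMT
  have hεD : ε * D ≤ M := (ENNReal.le_div_iff_mul_le (Or.inl hD0) (Or.inl hDT)).1 hεle
  have hkey : ∀ K' : ℝ≥0∞, K' ≤ D → t * K' ≤ 1 := by
    intro K' hK'
    have h1 : ε * K' ≤ M := le_trans (mul_le_mul_right hK' ε) hεD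
    calc t * K' = (ε * K') * M⁻¹ := by rw [ht, div_eq_mul_inv]; ring
      _ ≤ M * M⁻¹ := mul_le_mul_left h1 _
      _ ≤ 1 := by rw [ENNReal.mul_inv_cancel hM0 hMT]
  have ht1 : t ≤ 1 := by
    have := hkey 1 hD1
    simpa using this
  -- the pieces
  set μA : Measure X := t • m' with hμA
  have hμAle : μA ≤ γ₀.map Prod.fst := (smul_le_self ht1 m').trans hm'le
  haveI : IsFiniteMeasure μA := finite_of_le _ _ hμAle
  set γt0 : Measure (X × Y) := sub1 γ₀ μA with hγt0
  have hγt0fst : γt0.map Prod.fst = μA := sub1_map_fst γ₀ μA hμAle.absolutelyContinuous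
  have hγt0le : γt0 ≤ γ₀ := by
    have := sub1_le γ₀ μA one_ne_zero ENNReal.one_ne_top (by rw [one_smul]; exact hμAle)
    rwa [one_smul] at this
  set νA : Measure Y := γt0.map Prod.snd with hνA
  set Sζ : Measure (X × Y) := ∑ i ∈ Finset.range (n+1), ζs i with hSζ
  set Sη : Measure (X × Y) := ∑ i ∈ Finset.Icc 1 n, ηs i with hSη
  set γt' : Measure (X × Y) := t • Sζ with hγt'
  set γtinf : Measure (X × Y) := t • Sη with hγtinf
  set γt : Measure (X × Y) := γt0 + γtinf with hγt
  set μt : Measure X := t • ∑ i ∈ Finset.Icc 1 n, (ηs i).map Prod.fst with hμt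
  set νt : Measure Y := t • ∑ i ∈ Finset.Icc 1 n, (ηs i).map Prod.snd with hνt
  set νB : Measure Y := t • (ζs 0).map Prod.snd with hνB
  -- domination
  have hSζb : Sζ ≤ (((n+1 : ℕ) : ℝ≥0∞) * c) • γ' := by
    have h := sum_le_smul (Finset.range (n+1)) ζs c γ'
      (fun j hj => hζb j (Nat.lt_succ_iff.1 (Finset.mem_range.1 hj)))
    rwa [Finset.card_range] at h
  have hSηb : Sη ≤ (((n : ℕ) : ℝ≥0∞) * c) • (γ - γ₀) := by
    have h := sum_le_smul (Finset.Icc 1 n) ηs c (γ - γ₀)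
      (fun j hj => hηb j (Finset.mem_Icc.1 hj).1 (Finset.mem_Icc.1 hj).2)
    rwa [Nat.card_Icc, Nat.add_sub_cancel] at h
  have hγt'le : γt' ≤ γ' := by
    calc γt' ≤ t • ((((n+1 : ℕ) : ℝ≥0∞) * c) • γ') := smul_mono_meas hSζb
      _ = (t * (((n+1 : ℕ) : ℝ≥0∞) * c)) • γ' := by rw [smul_smul]
      _ ≤ γ' := by
          refine smul_le_self (hkey _ ?_) γ'
          rw [hD]
          refine mul_le_mul' ?_ (le_max_left c 1)
          exact_mod_cast (by omega : n + 1 ≤ 2*n+2)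
  have hγtinfle : γtinf ≤ γ - γ₀ := by
    calc γtinf ≤ t • ((((n : ℕ) : ℝ≥0∞) * c) • (γ - γ₀)) := smul_mono_meas hSηb
      _ = (t * (((n : ℕ) : ℝ≥0∞) * c)) • (γ - γ₀) := by rw [smul_smul]
      _ ≤ γ - γ₀ := by
          refine smul_le_self (hkey _ ?_) _
          rw [hD]
          refine mul_le_mul' ?_ (le_max_left c 1)
          exact_mod_cast (by omega : n ≤ 2*n+2)
  have hγtle : γt ≤ γ := by
    refine (add_le_add hγt0le hγtinfle).trans_eq ?_
    rw [add_comm, Measure.sub_add_cancel_of_le h0]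
  -- marginals
  have hγtinffst : γtinf.map Prod.fst = μt := by
    rw [hγtinf, Measure.map_smul, hSη, map_finset_sum _ _ measurable_fst, hμt]
  have hγtinfsnd : γtinf.map Prod.snd = νt := by
    rw [hγtinf, Measure.map_smul, hSη, map_finset_sum _ _ measurable_snd, hνt]
  have hγtfst : γt.map Prod.fst = μt + μA := by
    rw [hγt, Measure.map_add _ _ measurable_fst, hγt0fst, hγtinffst, add_comm]
  have hγtsnd : γt.map Prod.snd = νt + νA := by
    rw [hγt, Measure.map_add _ _ measurable_snd, hγtinfsnd, hνA, add_comm]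
  have hsumfst : ∑ i ∈ Finset.range (n+1), (ζs i).map Prod.fst =
      (∑ i ∈ Finset.Icc 1 n, (ηs i).map Prod.fst) + m' := by
    rw [Finset.sum_range_succ]
    congr 1
    rw [← Finset.Ico_add_one_right_eq_Icc, Finset.sum_Ico_eq_sum_range]
    refine Finset.sum_congr rfl fun i hi => ?_
    have hi' : i < n := Finset.mem_range.1 hi
    have h := hmfst (1+i) (by omega) (by omega)
    have h1 : 1 + i - 1 = i := by omega
    rw [h1] at h
    exact h.symm
  have hsumsnd : ∑ i ∈ Finset.range (n+1), (ζs i).map Prod.snd =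
      (∑ i ∈ Finset.Icc 1 n, (ηs i).map Prod.snd) + (ζs 0).map Prod.snd := by
    rw [Finset.sum_range_succ']
    congr 1
    rw [← Finset.Ico_add_one_right_eq_Icc, Finset.sum_Ico_eq_sum_range]
    refine Finset.sum_congr rfl fun i hi => ?_
    have hi' : i < n := Finset.mem_range.1 hi
    have h := hmsnd (1+i) (by omega) (by omega)
    have h1 : i + 1 = 1 + i := by omega
    rw [h1]
    exact h
  have hγt'fst : γt'.map Prod.fst = μt + μA := by
    rw [hγt', Measure.map_smul, hSζ, map_finset_sum _ _ measurable_fst, hsumfst,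
      smul_add, hμt, hμA]
  have hγt'snd : γt'.map Prod.snd = νt + νB := by
    rw [hγt', Measure.map_smul, hSζ, map_finset_sum _ _ measurable_snd, hsumsnd,
      smul_add, hνt, hνB]
  -- inequalities on the parts
  have hμtle : μt ≤ γ.map Prod.fst - γ₀.map Prod.fst := by
    rw [← hγtinffst]
    refine (Measure.map_mono hγtinfle measurable_fst).trans ?_
    refine Measure.le_iff.2 fun s hs => ?_
    rw [Measure.map_apply measurable_fst hs,
      Measure.sub_apply hs (Measure.map_mono h0 measurable_fst),
      Measure.sub_apply (measurable_fst hs) h0,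
      Measure.map_apply measurable_fst hs, Measure.map_apply measurable_fst hs]
  have hνAle : νA ≤ γ₀.map Prod.snd := by
    rw [hνA]; exact Measure.map_mono hγt0le measurable_snd
  have hνBle : νB ≤ γ₀.map Prod.snd := by
    rw [hνB]; exact (smul_le_self ht1 _).trans hζ0
  have hsing : νt.MutuallySingular (γ₀.map Prod.snd) := by
    refine ⟨Zseq γ γ' γ₀ 0, hZ0m, ?_, ?_⟩
    · rw [hνt, Measure.smul_apply, Measure.finset_sum_apply]
      rw [Finset.sum_eq_zero fun i hi =>
        hZ0n i (Finset.mem_Icc.1 hi).1 (Finset.mem_Icc.1 hi).2]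
      simp
    · exact null_off_carrier (γ₀.map Prod.snd) (γ.map Prod.snd)
        (Measure.map_mono h0 measurable_snd).absolutelyContinuous
  -- masses
  have hμAuniv : μA univ = ε := by
    rw [hμA, Measure.smul_apply, smul_eq_mul, ← hM, htM]
  have hγt0univ : γt0 univ = ε := by
    rw [← map_univ γt0 measurable_fst, hγt0fst, hμAuniv]
  have hγtinfuniv : γtinf univ = (n : ℝ≥0∞) * ε := by
    rw [hγtinf, Measure.smul_apply, hSη, Measure.finset_sum_apply]
    rw [Finset.sum_congr rfl fun i hi =>
      hmassη i (Finset.mem_Icc.1 hi).1 (Finset.mem_Icc.1 hi).2]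
    rw [Finset.sum_const, Nat.card_Icc, Nat.add_sub_cancel, nsmul_eq_mul, smul_eq_mul]
    rw [← mul_assoc, mul_comm t, mul_assoc, htM]
  have hγtuniv : γt univ = ((n : ℝ≥0∞) + 1) * ε := by
    rw [hγt, Measure.add_apply, hγt0univ, hγtinfuniv]
    ring
  have hγt'univ : γt' univ = ((n : ℝ≥0∞) + 1) * ε := by
    rw [hγt', Measure.smul_apply, hSζ, Measure.finset_sum_apply]
    rw [Finset.sum_congr rfl fun i hi =>
      hmass i (Nat.lt_succ_iff.1 (Finset.mem_range.1 hi))]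
    rw [Finset.sum_const, Finset.card_range, nsmul_eq_mul, smul_eq_mul]
    rw [← mul_assoc, mul_comm t, mul_assoc, htM]
    push_cast
    ring
  have hμtuniv : μt univ = (n : ℝ≥0∞) * ε := by
    rw [hμt, Measure.smul_apply, Measure.finset_sum_apply]
    rw [Finset.sum_congr rfl fun i hi => ?_]
    · rw [Finset.sum_const, Nat.card_Icc, Nat.add_sub_cancel, nsmul_eq_mul, smul_eq_mul]
      rw [← mul_assoc, mul_comm t, mul_assoc, htM]
    · rw [map_univ (ηs i) measurable_fst]
      exact hmassη i (Finset.mem_Icc.1 hi).1 (Finset.mem_Icc.1 hi).2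
  have hνtuniv : νt univ = (n : ℝ≥0∞) * ε := by
    rw [hνt, Measure.smul_apply, Measure.finset_sum_apply]
    rw [Finset.sum_congr rfl fun i hi => ?_]
    · rw [Finset.sum_const, Nat.card_Icc, Nat.add_sub_cancel, nsmul_eq_mul, smul_eq_mul]
      rw [← mul_assoc, mul_comm t, mul_assoc, htM]
    · rw [map_univ (ηs i) measurable_snd]
      exact hmassη i (Finset.mem_Icc.1 hi).1 (Finset.mem_Icc.1 hi).2
  have hνAuniv : νA univ = ε := by
    rw [hνA, map_univ γt0 measurable_snd, hγt0univ]
  have hνBuniv : νB univ = ε := by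
    rw [hνB, Measure.smul_apply, map_univ (ζs 0) measurable_snd, smul_eq_mul,
      hmass 0 (Nat.zero_le n), htM]
  exact ⟨γt, γt', γt0, γtinf, μt, νt, μA, νA, νB, hγtle, hγt'le, hγtfst, hγt'fst,
    hγtsnd, hγt'snd, hμAle, hμtle, hνAle, hνBle, hsing, hγtuniv, hγt'univ, hμtuniv,
    hνtuniv, hμAuniv, hνAuniv, hνBuniv, hγt, hγt0le, hγtinfle, hγt0fst, hνA.symm,
    hγtinffst, hγtinfsnd⟩

end Assembly

end ChainAux


/-- The Chain Lemma. Given `γ, γ' ∈ Π(μ, ν)` and a nonzero `γ₀ ≤ γ`, with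
`μ₀ = π₁ γ₀` and `ν₀ = π₂ γ₀`, there exist `N ∈ ℕ` and `ε̄ > 0` such that for every
`0 < ε ≤ ε̄` there are plans `γ̃ ≤ γ` and `γ̃' ≤ γ'` as in the statement. -/
theorem chain_lemma {d : ℕ} (μ ν : Measure (EuclideanSpace ℝ (Fin d)))
    [IsProbabilityMeasure μ] [IsProbabilityMeasure ν]
    (γ γ' : Measure (EuclideanSpace ℝ (Fin d) × EuclideanSpace ℝ (Fin d)))
    (hγ : γ ∈ Plans μ ν) (hγ' : γ' ∈ Plans μ ν)
    (γ₀ : Measure (EuclideanSpace ℝ (Fin d) × EuclideanSpace ℝ (Fin d)))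
    (hγ₀ : γ₀ ≤ γ) (hγ₀ne : γ₀ ≠ 0) :
    ∃ (N : ℕ) (εbar : ℝ≥0∞), 0 < εbar ∧
      ∀ ε : ℝ≥0∞, 0 < ε → ε ≤ εbar →
        ∃ (γt γt' γt0 γtinf :
            Measure (EuclideanSpace ℝ (Fin d) × EuclideanSpace ℝ (Fin d)))
          (μt νt μA νA νB : Measure (EuclideanSpace ℝ (Fin d))),
          γt ≤ γ ∧ γt' ≤ γ' ∧
          γt.map Prod.fst = μt + μA ∧ γt'.map Prod.fst = μt + μA ∧
          γt.map Prod.snd = νt + νA ∧ γt'.map Prod.snd = νt + νB ∧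
          μA ≤ γ₀.map Prod.fst ∧ μt ≤ μ - γ₀.map Prod.fst ∧
          νA ≤ γ₀.map Prod.snd ∧ νB ≤ γ₀.map Prod.snd ∧
          νt.MutuallySingular (γ₀.map Prod.snd) ∧
          γt univ = ((N : ℝ≥0∞) + 1) * ε ∧ γt' univ = ((N : ℝ≥0∞) + 1) * ε ∧
          μt univ = (N : ℝ≥0∞) * ε ∧ νt univ = (N : ℝ≥0∞) * ε ∧
          μA univ = ε ∧ νA univ = ε ∧ νB univ = ε ∧
          γt = γt0 + γtinf ∧ γt0 ≤ γ₀ ∧ γtinf ≤ γ - γ₀ ∧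
          γt0.map Prod.fst = μA ∧ γt0.map Prod.snd = νA ∧
          γtinf.map Prod.fst = μt ∧ γtinf.map Prod.snd = νt := by
  obtain ⟨hγp, hγf, hγs⟩ := hγ
  obtain ⟨hγ'p, hγ'f, hγ's⟩ := hγ'
  haveI : IsProbabilityMeasure γ := hγp
  haveI : IsProbabilityMeasure γ' := hγ'p
  haveI : IsFiniteMeasure γ₀ := ChainAux.finite_of_le γ₀ γ hγ₀
  have hfst : γ'.map Prod.fst = γ.map Prod.fst := hγ'f.trans hγf.symm
  have hsnd : γ'.map Prod.snd = γ.map Prod.snd := hγ's.trans hγs.symm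
  rw [← hγf]
  exact ChainAux.chain_core γ γ' γ₀ hγ₀ hγ₀ne hfst hsnd
end
end

section
/- Let r > 0, K > 0, ε > 0, and let μ be a finite positive measure supported in the cube Q = [0,r]^d ⊆ ℝ^d, of total mass m > 0, absolutely continuous with respect to Lebesgue measure with density bounded above by K. Write points of ℝ^d as x = (σ,τ) with σ ∈ ℝ and τ ∈ ℝ^{d−1}, let α be the pushforward of μ under the projection (σ,τ) ↦ τ, and let μ = μ_τ ⊗ α be the disintegration of μ with respect to this projection, so that μ_τ is a probability measure on [0,r] (in the σ variable) for α-a.e. τ. Fix 0 < δ < 1, set H = K r^d/(ε m), and for α-a.e. τ and every σ ∈ [0,r] with μ_τ([0,σ]) ≤ 1 − δ let f_τ(σ) be determined by μ_τ((σ, f_τ(σ)]) = δ. Define Z = {τ ∈ [0,r]^{d−1} : ∃σ ∈ [0,r] with μ_τ([0,σ]) ≤ 1 − δ and f_τ(σ) − σ < rδ/H}. Then α(Z) ≤ ε m. -/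
/-!
Let `g` be the density of the marginal `α` with respect to Lebesgue measure. If the fibre
`μ_τ` puts mass `δ` on an interval `I`, then over a set `T` of fibres of this kind where
`g ≥ q`, the box `I × T` carries `μ`-mass at least `δ α(T) ≥ δ q |T|` and at most
`K |I| |T|`; hence `g(τ) ≤ K |I| / δ` for `α`-a.e. such `τ`. On the bad set the interval
`(σ, f_τ(σ)]` is shorter than `rδ/H`, which forces `g ≤ εm / r^n` there, and integrating
this bound over the cube `[0,r]^n` gives `α(Z) ≤ εm`.
-/

open MeasureTheory Set Filter
open scoped ENNReal

lemma exists_rat_Ioc_superset_of_sub_lt {x y L : ℝ} (h : y - x < L) :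
    ∃ a b : ℚ, Ioc x y ⊆ Ioc (a : ℝ) b ∧ (b : ℝ) - a < L := by
  obtain ⟨a, ha, hax⟩ := exists_rat_btwn (show x - (L - (y - x)) / 2 < x by linarith)
  obtain ⟨b, hyb, hb⟩ := exists_rat_btwn (show y < y + (L - (y - x)) / 2 by linarith)
  exact ⟨a, b, Ioc_subset_Ioc hax.le hyb.le, by linarith⟩

lemma lintegral_add_mul_measure_le_measure_univ {X : Type*} [MeasurableSpace X]
    {ρ : Measure X} {F : X → ℝ≥0∞} {B : Set X} {c : ℝ≥0∞}
    (hF : ∀ᵐ x ∂ρ, F x ≤ 1) (hFB : ∀ᵐ x ∂ρ, x ∈ B → F x + c ≤ 1) :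
    ∫⁻ x, F x ∂ρ + c * ρ B ≤ ρ univ := by
  obtain ⟨g, hgm, hgF, hgeq⟩ := exists_measurable_le_lintegral_eq ρ F
  set S : Set X := {x | g x + c ≤ 1}
  have hS : MeasurableSet S := measurableSet_le (hgm.add_const c) measurable_const
  have hBS : ρ B ≤ ρ S := measure_mono_ae <| by
    filter_upwards [hFB] with x hx hxB using (add_le_add_left (hgF x) c).trans (hx hxB)
  calc ∫⁻ x, F x ∂ρ + c * ρ B ≤ ∫⁻ x, g x ∂ρ + c * ρ S := by rw [← hgeq]; gcongr
    _ = ∫⁻ x, g x + S.indicator (fun _ ↦ c) x ∂ρ := by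
      rw [lintegral_add_left hgm, lintegral_indicator_const hS]
    _ ≤ ∫⁻ _, 1 ∂ρ := lintegral_mono_ae <| by
      filter_upwards [hF] with x hx
      by_cases hxS : x ∈ S
      · rw [indicator_of_mem hxS]; exact hxS
      · rw [indicator_of_notMem hxS, add_zero]; exact (hgF x).trans hx
    _ = ρ univ := by rw [lintegral_const, one_mul]

lemma measure_inter_setOf_rnDeriv_le_le {X : Type*} [MeasurableSpace X] {α ν : Measure X}
    [α.HaveLebesgueDecomposition ν] (hαν : α ≪ ν) {S : Set X} (hS : MeasurableSet S)
    (c : ℝ≥0∞) : α (S ∩ {x | α.rnDeriv ν x ≤ c}) ≤ c * ν S := by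
  have hSc : MeasurableSet (S ∩ {x | α.rnDeriv ν x ≤ c}) :=
    hS.inter (measurableSet_le (by fun_prop) measurable_const)
  calc α (S ∩ {x | α.rnDeriv ν x ≤ c})
      = ∫⁻ x in S ∩ {x | α.rnDeriv ν x ≤ c}, α.rnDeriv ν x ∂ν :=
        (Measure.setLIntegral_rnDeriv' hαν hSc).symm
    _ ≤ ∫⁻ _ in S ∩ {x | α.rnDeriv ν x ≤ c}, c ∂ν :=
        setLIntegral_mono measurable_const fun _ hx ↦ hx.2
    _ = c * ν (S ∩ {x | α.rnDeriv ν x ≤ c}) := setLIntegral_const _ c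
    _ ≤ c * ν S := by gcongr; exact inter_subset_left

/-- The disintegration `μ = μ_τ ⊗ α` of the paper; `τ ↦ κ τ` need not be measurable. -/
structure IsFiberDisintegration {X Y : Type*} [MeasurableSpace X] [MeasurableSpace Y]
    (μ : Measure (X × Y)) (α : Measure Y) (κ : Y → Measure X) : Prop where
  ae_isProbabilityMeasure : ∀ᵐ τ ∂α, IsProbabilityMeasure (κ τ)
  measure_eq_lintegral : ∀ s, MeasurableSet s → μ s = ∫⁻ τ, κ τ {σ | (σ, τ) ∈ s} ∂α

namespace IsFiberDisintegration

variable {X Y : Type*} [MeasurableSpace X] [MeasurableSpace Y]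
  {μ : Measure (X × Y)} {α : Measure Y} {κ : Y → Measure X}

lemma measure_univ_prod (hd : IsFiberDisintegration μ α κ) {N : Set Y}
    (hN : MeasurableSet N) : μ (univ ×ˢ N) = α N := by
  rw [hd.measure_eq_lintegral _ (MeasurableSet.univ.prod hN), ← lintegral_indicator_one hN]
  refine lintegral_congr_ae ?_
  filter_upwards [hd.ae_isProbabilityMeasure] with τ hτ
  by_cases hτN : τ ∈ N <;> simp [hτN]

lemma isFiniteMeasure [IsFiniteMeasure μ] (hd : IsFiberDisintegration μ α κ) :
    IsFiniteMeasure α :=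
  ⟨by rw [← hd.measure_univ_prod MeasurableSet.univ, univ_prod_univ]; exact measure_lt_top μ univ⟩

lemma absolutelyContinuous (hd : IsFiberDisintegration μ α κ) {ℓ : Measure X}
    {ν : Measure Y} [SFinite ν] {K : ℝ≥0∞} (hdens : ∀ s, μ s ≤ K * ℓ.prod ν s) : α ≪ ν := by
  refine Measure.AbsolutelyContinuous.mk fun N hN hνN ↦ ?_
  rw [← hd.measure_univ_prod hN]
  exact nonpos_iff_eq_zero.1 <| (hdens _).trans_eq <| by simp [Measure.prod_prod, hνN]

/- The fibre masses may be non-measurable in `τ`, so the lower bound goes through the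
complement `(I ×ˢ T)ᶜ`, whose fibre over `τ ∈ T` has mass `1 - κ τ I ≤ 1 - c`. -/
lemma mul_measure_le_measure_prod [IsFiniteMeasure μ] (hd : IsFiberDisintegration μ α κ)
    {I : Set X} (hI : MeasurableSet I) {T B : Set Y} (hT : MeasurableSet T) (hBT : B ⊆ T)
    {c : ℝ≥0∞} (hB : ∀ τ ∈ B, c ≤ κ τ I) : c * α B ≤ μ (I ×ˢ T) := by
  have hs : MeasurableSet (I ×ˢ T) := hI.prod hT
  have hfiber : ∀ τ ∈ T, {σ | (σ, τ) ∈ (I ×ˢ T)ᶜ} = Iᶜ := fun τ hτ ↦ by ext; simp [hτ]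
  have key := lintegral_add_mul_measure_le_measure_univ (ρ := α) (B := B) (c := c)
    (F := fun τ ↦ κ τ {σ | (σ, τ) ∈ (I ×ˢ T)ᶜ})
    (by filter_upwards [hd.ae_isProbabilityMeasure] with τ hτ using prob_le_one)
    (by
      filter_upwards [hd.ae_isProbabilityMeasure] with τ hτ hτB
      calc κ τ {σ | (σ, τ) ∈ (I ×ˢ T)ᶜ} + c = κ τ Iᶜ + c := by rw [hfiber τ (hBT hτB)]
        _ ≤ κ τ Iᶜ + κ τ I := by gcongr; exact hB τ hτB
        _ = 1 := by rw [add_comm, measure_add_measure_compl hI, measure_univ])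
  rw [← hd.measure_eq_lintegral _ hs.compl, ← hd.measure_univ_prod MeasurableSet.univ,
    univ_prod_univ, ← measure_add_measure_compl hs, add_comm (μ _)] at key
  exact (ENNReal.add_le_add_iff_right (measure_ne_top μ _)).1 key

variable {μ : Measure (ℝ × Y)} {κ : Y → Measure ℝ} {ν : Measure Y} [SFinite ν]

lemma measure_setOf_le_fiber_Ioc_and_le_rnDeriv_eq_zero [IsFiniteMeasure μ]
    (hd : IsFiberDisintegration μ α κ) {K : ℝ≥0∞} (hdens : ∀ s, μ s ≤ K * volume.prod ν s)
    {a b : ℝ} {δ q : ℝ≥0∞} (h : K * ENNReal.ofReal (b - a) < δ * q) :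
    α {τ | δ ≤ κ τ (Ioc a b) ∧ q ≤ α.rnDeriv ν τ} = 0 := by
  have := hd.isFiniteMeasure
  set B := {τ | δ ≤ κ τ (Ioc a b) ∧ q ≤ α.rnDeriv ν τ}
  set T := toMeasurable α B ∩ {τ | q ≤ α.rnDeriv ν τ}
  have hT : MeasurableSet T :=
    (measurableSet_toMeasurable α B).inter (measurableSet_le measurable_const (by fun_prop))
  have hBT : B ⊆ T := fun τ hτ ↦ ⟨subset_toMeasurable α B hτ, hτ.2⟩
  have hαT : α T = α B :=
    ((measure_mono inter_subset_left).trans (measure_toMeasurable B).le).antisymm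
      (measure_mono hBT)
  have hbox : δ * α B ≤ K * (ENNReal.ofReal (b - a) * ν T) :=
    calc δ * α B ≤ μ (Ioc a b ×ˢ T) :=
          hd.mul_measure_le_measure_prod measurableSet_Ioc hT hBT fun _ hτ ↦ hτ.1
      _ ≤ K * (ENNReal.ofReal (b - a) * ν T) := by
          simpa [Measure.prod_prod] using hdens (Ioc a b ×ˢ T)
  have hdensity : q * ν T ≤ α B :=
    calc q * ν T = ∫⁻ _ in T, q ∂ν := (setLIntegral_const T q).symm
      _ ≤ ∫⁻ τ in T, α.rnDeriv ν τ ∂ν := setLIntegral_mono (by fun_prop) fun _ hτ ↦ hτ.2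
      _ ≤ α B := hαT ▸ Measure.setLIntegral_rnDeriv_le T
  by_contra hB
  refine h.not_ge <| (ENNReal.mul_le_mul_iff_left hB (measure_ne_top α B)).1 ?_
  calc δ * q * α B = q * (δ * α B) := by ring
    _ ≤ q * (K * (ENNReal.ofReal (b - a) * ν T)) := by gcongr
    _ = K * ENNReal.ofReal (b - a) * (q * ν T) := by ring
    _ ≤ K * ENNReal.ofReal (b - a) * α B := by gcongr

lemma ae_rnDeriv_le_of_le_fiber_Ioc [IsFiniteMeasure μ] (hd : IsFiberDisintegration μ α κ)
    {K δ : ℝ} (hK : 0 < K) (hδ : 0 < δ) (hdens : ∀ s, μ s ≤ ENNReal.ofReal K * volume.prod ν s) :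
    ∀ᵐ τ ∂α, ∀ x y : ℝ, ENNReal.ofReal δ ≤ κ τ (Ioc x y) →
      α.rnDeriv ν τ ≤ ENNReal.ofReal (K * (y - x) / δ) := by
  have hnull : ∀ p : ℚ × ℚ × ℚ, ∀ᵐ τ ∂α, 0 < (p.2.2 : ℝ) → K * (p.2.1 - p.1 : ℝ) < δ * p.2.2 →
      ¬(ENNReal.ofReal δ ≤ κ τ (Ioc p.1 p.2.1) ∧ ENNReal.ofReal p.2.2 ≤ α.rnDeriv ν τ) := by
    rintro ⟨a, b, q⟩
    by_cases hq : 0 < (q : ℝ) ∧ K * (b - a : ℝ) < δ * q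
    · have hlt : ENNReal.ofReal K * ENNReal.ofReal (b - a) <
          ENNReal.ofReal δ * ENNReal.ofReal q := by
        rw [← ENNReal.ofReal_mul hK.le, ← ENNReal.ofReal_mul hδ.le]
        exact ENNReal.ofReal_lt_ofReal_iff'.2 ⟨hq.2, mul_pos hδ hq.1⟩
      filter_upwards [measure_eq_zero_iff_ae_notMem.1
        (hd.measure_setOf_le_fiber_Ioc_and_le_rnDeriv_eq_zero hdens hlt)] with τ hτ _ _ using hτ
    · exact Eventually.of_forall fun _ h₁ h₂ ↦ absurd ⟨h₁, h₂⟩ hq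
  filter_upwards [ae_all_iff.2 hnull] with τ hτ x y hxy
  by_contra! hlt
  obtain ⟨q, -, hcq, hqg⟩ := ENNReal.lt_iff_exists_rat_btwn.1 hlt
  obtain ⟨hcq', hq0⟩ := ENNReal.ofReal_lt_ofReal_iff'.1 hcq
  have hq : K * (y - x) < δ * q := by rwa [div_lt_iff₀ hδ, mul_comm (q : ℝ)] at hcq'
  obtain ⟨a, b, hsub, hab⟩ := exists_rat_Ioc_superset_of_sub_lt <| by
    rwa [← lt_div_iff₀' hK] at hq
  exact hτ (a, b, q) hq0 (by rwa [← lt_div_iff₀' hK]) ⟨hxy.trans (measure_mono hsub), hqg.le⟩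

end IsFiberDisintegration

theorem bad_set_estimate_general (n : ℕ) (r K ε δ m : ℝ)
    (hr : 0 < r) (hK : 0 < K) (hε : 0 < ε) (hδ : 0 < δ) (hm : 0 < m)
    (μ : Measure (ℝ × (Fin n → ℝ)))
    (hmass : μ univ = ENNReal.ofReal m)
    (hdens : ∀ s : Set (ℝ × (Fin n → ℝ)), μ s ≤ ENNReal.ofReal K * volume s)
    (α : Measure (Fin n → ℝ))
    (μτ : (Fin n → ℝ) → Measure ℝ)
    (hμτ : ∀ᵐ τ ∂α, IsProbabilityMeasure (μτ τ) ∧ μτ τ (Icc (0 : ℝ) r)ᶜ = 0)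
    (hdisint : ∀ s : Set (ℝ × (Fin n → ℝ)), MeasurableSet s →
      μ s = ∫⁻ τ, μτ τ {σ : ℝ | (σ, τ) ∈ s} ∂α)
    (f : (Fin n → ℝ) → ℝ → ℝ)
    (hf : ∀ᵐ τ ∂α, ∀ σ ∈ Icc (0 : ℝ) r,
      μτ τ (Icc (0 : ℝ) σ) ≤ ENNReal.ofReal (1 - δ) →
        μτ τ (Ioc σ (f τ σ)) = ENNReal.ofReal δ)
    (H : ℝ) (hH : H = K * r ^ (n + 1) / (ε * m)) :
    α {τ | τ ∈ Icc (0 : Fin n → ℝ) (fun _ => r) ∧ ∃ σ ∈ Icc (0 : ℝ) r,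
        μτ τ (Icc (0 : ℝ) σ) ≤ ENNReal.ofReal (1 - δ) ∧ f τ σ - σ < r * δ / H} ≤
      ENNReal.ofReal (ε * m) := by
  have : IsFiniteMeasure μ := ⟨by simp [hmass]⟩
  have hd : IsFiberDisintegration μ α μτ := ⟨hμτ.mono fun _ h ↦ h.1, hdisint⟩
  have := hd.isFiniteMeasure
  rw [Measure.volume_eq_prod] at hdens
  set c := ε * m / r ^ n with hc
  have hshort : r * δ / H = δ * c / K := by
    rw [hH, hc]; field_simp; ring
  calc α _ ≤ α (Icc 0 (fun _ ↦ r) ∩ {τ | α.rnDeriv volume τ ≤ ENNReal.ofReal c}) := by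
        refine measure_mono_ae ?_
        filter_upwards [hd.ae_rnDeriv_le_of_le_fiber_Ioc hK hδ hdens, hf]
          with τ hg hfτ ⟨hcube, σ, hσ, hσδ, hfσ⟩
        refine ⟨hcube, (hg σ (f τ σ) (hfτ σ hσ hσδ).ge).trans (ENNReal.ofReal_le_ofReal ?_)⟩
        rw [hshort, lt_div_iff₀ hK] at hfσ
        rw [div_le_iff₀ hδ]
        linarith
    _ ≤ ENNReal.ofReal c * volume (Icc (0 : Fin n → ℝ) (fun _ ↦ r)) :=
        measure_inter_setOf_rnDeriv_le_le (hd.absolutelyContinuous hdens) measurableSet_Icc _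
    _ = ENNReal.ofReal (ε * m) := by
        rw [Real.volume_Icc_pi]
        simp only [Pi.zero_apply, sub_zero, Finset.prod_const, Finset.card_univ, Fintype.card_fin]
        rw [← ENNReal.ofReal_pow hr.le, ← ENNReal.ofReal_mul (by positivity), hc,
          div_mul_cancel₀ _ (by positivity)]

/-- The estimate `α(Z) ≤ ε m` on the "bad set" `Z` of fibers on which the shift function
`f_τ` moves some point less than `rδ/H`, where `H = K r^d / (ε m)`. Points of
`ℝ^d = ℝ^{1+n}` are written `x = (σ, τ)` with `σ ∈ ℝ`, `τ ∈ ℝ^n`; `μ` is a finite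
measure supported in the cube `[0,r]^{1+n}`, of total mass `m`, with density bounded by
`K`, `α` is the marginal of `μ` in the `τ` variables, `μ_τ ⊗ α` is the disintegration
of `μ`, and `f_τ (σ)` is defined by `μ_τ ((σ, f_τ(σ)]) = δ` whenever
`μ_τ ([0, σ]) ≤ 1 - δ`. -/
theorem bad_set_estimate (n : ℕ) (r K ε δ m : ℝ)
    (hr : 0 < r) (hK : 0 < K) (hε : 0 < ε) (hδ : 0 < δ) (hδ1 : δ < 1) (hm : 0 < m)
    (μ : Measure (ℝ × (Fin n → ℝ)))
    (hsupp : μ ((Icc (0 : ℝ) r ×ˢ Icc (0 : Fin n → ℝ) (fun _ => r))ᶜ) = 0)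
    (hmass : μ univ = ENNReal.ofReal m)
    (hdens : ∀ s : Set (ℝ × (Fin n → ℝ)), μ s ≤ ENNReal.ofReal K * volume s)
    (α : Measure (Fin n → ℝ)) (hα : α = μ.map Prod.snd)
    (μτ : (Fin n → ℝ) → Measure ℝ)
    (hμτ : ∀ᵐ τ ∂α, IsProbabilityMeasure (μτ τ) ∧ μτ τ (Icc (0 : ℝ) r)ᶜ = 0)
    (hdisint : ∀ s : Set (ℝ × (Fin n → ℝ)), MeasurableSet s →
      μ s = ∫⁻ τ, μτ τ {σ : ℝ | (σ, τ) ∈ s} ∂α)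
    (f : (Fin n → ℝ) → ℝ → ℝ)
    (hf : ∀ᵐ τ ∂α, ∀ σ ∈ Icc (0 : ℝ) r,
      μτ τ (Icc (0 : ℝ) σ) ≤ ENNReal.ofReal (1 - δ) →
        μτ τ (Ioc σ (f τ σ)) = ENNReal.ofReal δ)
    (H : ℝ) (hH : H = K * r ^ (n + 1) / (ε * m)) :
    α {τ | τ ∈ Icc (0 : Fin n → ℝ) (fun _ => r) ∧ ∃ σ ∈ Icc (0 : ℝ) r,
        μτ τ (Icc (0 : ℝ) σ) ≤ ENNReal.ofReal (1 - δ) ∧ f τ σ - σ < r * δ / H} ≤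
      ENNReal.ofReal (ε * m) :=
  bad_set_estimate_general n r K ε δ m hr hK hε hδ hm μ hmass hdens α μτ hμτ hdisint f hf H hH
end
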